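/- arXiv:math/0610009 — 7 statements merged into one kernel-verified Lean document; each statement's English description precedes it below -/
import Mathlib

section
/- Brown Factorization Lemma: in a precofibration category, every map f : A → B between cofibrant objects factors as f = r ∘ f' where f' is a cofibration and r is a weak equivalence admitting a right inverse s which is a trivial cofibration (so r ∘ s = id_B). -/
open CategoryTheory CategoryTheory.Limits

universe w v u

variable (C : Type u) [Category.{v} C] [HasInitial C]

/-- An Anderson–Brown–Cisinski precofibration category structure on `C`:
classes of weak equivalences `W` and cofibrations `Cof` satisfying the axioms CF1–CF4. -/
structure PrecofCat where
  /-- the class of weak equivalences -/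
  W : MorphismProperty C
  /-- the class of cofibrations -/
  Cof : MorphismProperty C
  /-- CF1: cofibrations are closed under composition -/
  cof_comp : ∀ {X Y Z : C} (f : X ⟶ Y) (g : Y ⟶ Z), Cof f → Cof g → Cof (f ≫ g)
  /-- CF1: the initial object is cofibrant -/
  initial_cofibrant : Cof (initial.to (⊥_ C))
  /-- CF1: isomorphisms are weak equivalences -/
  iso_W : ∀ {X Y : C} (f : X ⟶ Y), IsIso f → W f
  /-- CF1: isomorphisms with cofibrant domain are cofibrations -/
  iso_cof : ∀ {X Y : C} (f : X ⟶ Y), IsIso f → Cof (initial.to X) → Cof f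
  /-- CF2: two-out-of-three -/
  W_comp : ∀ {X Y Z : C} (f : X ⟶ Y) (g : Y ⟶ Z), W f → W g → W (f ≫ g)
  W_cancel_left : ∀ {X Y Z : C} (f : X ⟶ Y) (g : Y ⟶ Z), W f → W (f ≫ g) → W g
  W_cancel_right : ∀ {X Y Z : C} (f : X ⟶ Y) (g : Y ⟶ Z), W g → W (f ≫ g) → W f
  /-- CF3: pushouts of cofibrations with cofibrant corners exist -/
  pushout_exists : ∀ {A B X : C} (i : A ⟶ B) (f : A ⟶ X), Cof i →
      Cof (initial.to A) → Cof (initial.to X) →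
      ∃ (D : C) (g : B ⟶ D) (j : X ⟶ D), IsPushout i f g j
  /-- CF3: the pushout of a cofibration is a cofibration -/
  pushout_cof : ∀ {A B X D : C} (i : A ⟶ B) (f : A ⟶ X) (g : B ⟶ D) (j : X ⟶ D),
      Cof i → Cof (initial.to A) → Cof (initial.to X) → IsPushout i f g j → Cof j
  /-- CF3: the pushout of a trivial cofibration is a trivial cofibration -/
  pushout_triv_cof : ∀ {A B X D : C} (i : A ⟶ B) (f : A ⟶ X) (g : B ⟶ D) (j : X ⟶ D),
      Cof i → W i → Cof (initial.to A) → Cof (initial.to X) → IsPushout i f g j → W j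
  /-- CF4: factorization of maps with cofibrant domain -/
  factorization : ∀ {A B : C} (f : A ⟶ B), Cof (initial.to A) →
      ∃ (Z : C) (f' : A ⟶ Z) (r : Z ⟶ B), Cof f' ∧ W r ∧ f' ≫ r = f

variable {C}

/-- An object is cofibrant if the map from the initial object is a cofibration. -/
def PrecofCat.Cofibrant (P : PrecofCat C) (A : C) : Prop :=
  P.Cof (initial.to A)

/-- Brown Factorization Lemma: every map between cofibrant objects factors as a
cofibration followed by a weak equivalence admitting a right inverse which is a
trivial cofibration. -/
theorem brown_factorization (P : PrecofCat C) {A B : C} (f : A ⟶ B)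
    (hA : P.Cofibrant A) (hB : P.Cofibrant B) :
    ∃ (B' : C) (f' : A ⟶ B') (r : B' ⟶ B) (s : B ⟶ B'),
      P.Cof f' ∧ P.W r ∧ P.Cof s ∧ P.W s ∧ f' ≫ r = f ∧ s ≫ r = 𝟙 B := by
  -- form the coproduct D = A ⊔ B as a pushout over the initial object
  obtain ⟨D, g, j, hpo⟩ := P.pushout_exists (initial.to A) (initial.to B) hA
    P.initial_cofibrant hB
  have hj : P.Cof j := P.pushout_cof _ _ _ _ hA P.initial_cofibrant hB hpo
  have hg : P.Cof g := P.pushout_cof _ _ _ _ hB P.initial_cofibrant hA hpo.flip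
  have hD : P.Cof (initial.to D) := by
    have : initial.to D = initial.to B ≫ j := initial.hom_ext _ _
    rw [this]; exact P.cof_comp _ _ hB hj
  -- the map (f, id) : D → B
  have hcomm : initial.to A ≫ f = initial.to B ≫ 𝟙 B := initial.hom_ext _ _
  let d : D ⟶ B := hpo.desc f (𝟙 B) hcomm
  have hgd : g ≫ d = f := hpo.inl_desc f (𝟙 B) hcomm
  have hjd : j ≫ d = 𝟙 B := hpo.inr_desc f (𝟙 B) hcomm
  -- factor d
  obtain ⟨Z, q, r, hq, hr, hqr⟩ := P.factorization d hD
  refine ⟨Z, g ≫ q, r, j ≫ q, P.cof_comp _ _ hg hq, hr, P.cof_comp _ _ hj hq, ?_, ?_, ?_⟩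
  · have hW : P.W ((j ≫ q) ≫ r) := by
      rw [Category.assoc, hqr, hjd]
      exact P.iso_W _ inferInstance
    exact P.W_cancel_right _ _ hr hW
  · rw [Category.assoc, hqr, hgd]
  · rw [Category.assoc, hqr, hjd]
end

section
/- In the presence of axioms CF1, CF2, CF3(1) and CF4, the following are equivalent: (a) pushouts of trivial cofibrations with cofibrant corners are trivial cofibrations (axiom CF3(2)); (b) the gluing lemma holds (in a cube of pushouts along cofibrations with appropriate cofibrancy hypotheses, if the three given vertical maps are weak equivalences then so is the fourth); (c) excision holds (the pushout of a weak equivalence between cofibrant objects along a cofibration with cofibrant domain is a weak equivalence). -/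
open CategoryTheory CategoryTheory.Limits

universe w v u

variable (C : Type u) [Category.{v} C] [HasInitial C]

/-- A category with weak equivalences and cofibrations satisfying the axioms CF1, CF2,
CF3 (1) and CF4 (but not necessarily CF3 (2)). -/
structure PrecofBase where
  W : MorphismProperty C
  Cof : MorphismProperty C
  cof_comp : ∀ {X Y Z : C} (f : X ⟶ Y) (g : Y ⟶ Z), Cof f → Cof g → Cof (f ≫ g)
  initial_cofibrant : Cof (initial.to (⊥_ C))
  iso_W : ∀ {X Y : C} (f : X ⟶ Y), IsIso f → W f
  iso_cof : ∀ {X Y : C} (f : X ⟶ Y), IsIso f → Cof (initial.to X) → Cof f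
  W_comp : ∀ {X Y Z : C} (f : X ⟶ Y) (g : Y ⟶ Z), W f → W g → W (f ≫ g)
  W_cancel_left : ∀ {X Y Z : C} (f : X ⟶ Y) (g : Y ⟶ Z), W f → W (f ≫ g) → W g
  W_cancel_right : ∀ {X Y Z : C} (f : X ⟶ Y) (g : Y ⟶ Z), W g → W (f ≫ g) → W f
  pushout_exists : ∀ {A B X : C} (i : A ⟶ B) (f : A ⟶ X), Cof i →
      Cof (initial.to A) → Cof (initial.to X) →
      ∃ (D : C) (g : B ⟶ D) (j : X ⟶ D), IsPushout i f g j
  pushout_cof : ∀ {A B X D : C} (i : A ⟶ B) (f : A ⟶ X) (g : B ⟶ D) (j : X ⟶ D),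
      Cof i → Cof (initial.to A) → Cof (initial.to X) → IsPushout i f g j → Cof j
  factorization : ∀ {A B : C} (f : A ⟶ B), Cof (initial.to A) →
      ∃ (Z : C) (f' : A ⟶ Z) (r : Z ⟶ B), Cof f' ∧ W r ∧ f' ≫ r = f

variable {C}

/-- An object is cofibrant if the map from the initial object is a cofibration. -/
def PrecofBase.Cofibrant (P : PrecofBase C) (A : C) : Prop :=
  P.Cof (initial.to A)

/-- Axiom CF3 (2): pushouts of trivial cofibrations with cofibrant corners are trivial
cofibrations. -/
def PrecofBase.CF3Two (P : PrecofBase C) : Prop :=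
  ∀ {A B X D : C} (i : A ⟶ B) (f : A ⟶ X) (g : B ⟶ D) (j : X ⟶ D),
    P.Cof i → P.W i → P.Cofibrant A → P.Cofibrant X → IsPushout i f g j → P.W j

/-- The Gluing Lemma: in a commutative cube whose top and bottom faces are pushouts of
cofibrations with suitable cofibrant corners, if three of the vertical maps are weak
equivalences then so is the fourth. -/
def PrecofBase.Gluing (P : PrecofBase C) : Prop :=
  ∀ {A₁ A₂ A₃ A₄ B₁ B₂ B₃ B₄ : C}
    (f₁₂ : A₁ ⟶ A₂) (f₁₃ : A₁ ⟶ A₃) (f₂₄ : A₂ ⟶ A₄) (f₃₄ : A₃ ⟶ A₄)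
    (g₁₂ : B₁ ⟶ B₂) (g₁₃ : B₁ ⟶ B₃) (g₂₄ : B₂ ⟶ B₄) (g₃₄ : B₃ ⟶ B₄)
    (u₁ : A₁ ⟶ B₁) (u₂ : A₂ ⟶ B₂) (u₃ : A₃ ⟶ B₃) (u₄ : A₄ ⟶ B₄),
    IsPushout f₁₂ f₁₃ f₂₄ f₃₄ → IsPushout g₁₂ g₁₃ g₂₄ g₃₄ →
    P.Cof f₁₂ → P.Cof g₁₂ →
    P.Cofibrant A₁ → P.Cofibrant A₃ → P.Cofibrant B₁ → P.Cofibrant B₃ →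
    u₁ ≫ g₁₂ = f₁₂ ≫ u₂ → u₁ ≫ g₁₃ = f₁₃ ≫ u₃ →
    u₂ ≫ g₂₄ = f₂₄ ≫ u₄ → u₃ ≫ g₃₄ = f₃₄ ≫ u₄ →
    P.W u₁ → P.W u₂ → P.W u₃ → P.W u₄

/-- Excision: the pushout of a weak equivalence between cofibrant objects along a
cofibration with cofibrant domain is a weak equivalence. -/
def PrecofBase.Excision (P : PrecofBase C) : Prop :=
  ∀ {A B X D : C} (i : A ⟶ B) (f : A ⟶ X) (g : B ⟶ D) (j : X ⟶ D),
    P.Cof i → P.Cofibrant A → P.Cofibrant X → P.W f → IsPushout i f g j → P.W g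

namespace PrecofBase

variable (P : PrecofBase C)

lemma cofibrant_of {A B : C} (f : A ⟶ B) (hA : P.Cofibrant A) (hf : P.Cof f) :
    P.Cofibrant B := by
  have h : initial.to B = initial.to A ≫ f := initial.hom_ext _ _
  show P.Cof (initial.to B)
  rw [h]
  exact P.cof_comp _ _ hA hf

lemma W_id (A : C) : P.W (𝟙 A) := P.iso_W _ inferInstance

/-- Any two pushouts of the same span are related by a compatible isomorphism. -/
lemma isPushout_compare {A X B D D' : C} {i : A ⟶ B} {f : A ⟶ X}
    {g : B ⟶ D} {j : X ⟶ D} {g' : B ⟶ D'} {j' : X ⟶ D'}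
    (h : IsPushout i f g j) (h' : IsPushout i f g' j') :
    ∃ φ : D ⟶ D', IsIso φ ∧ g ≫ φ = g' ∧ j ≫ φ = j' := by
  refine ⟨h.desc g' j' h'.w, ⟨h'.desc g j h.w, ?_, ?_⟩, h.inl_desc _ _ _, h.inr_desc _ _ _⟩
  · apply h.hom_ext
    · rw [← Category.assoc, h.inl_desc, h'.inl_desc, Category.comp_id]
    · rw [← Category.assoc, h.inr_desc, h'.inr_desc, Category.comp_id]
  · apply h'.hom_ext
    · rw [← Category.assoc, h'.inl_desc, h.inl_desc, Category.comp_id]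
    · rw [← Category.assoc, h'.inr_desc, h.inr_desc, Category.comp_id]

lemma W_inl_of_isPushout {A X B D D' : C} {i : A ⟶ B} {f : A ⟶ X}
    {g : B ⟶ D} {j : X ⟶ D} {g' : B ⟶ D'} {j' : X ⟶ D'}
    (h : IsPushout i f g j) (h' : IsPushout i f g' j') (hg : P.W g) : P.W g' := by
  obtain ⟨φ, hiso, h1, _⟩ := isPushout_compare h h'
  rw [← h1]
  exact P.W_comp _ _ hg (P.iso_W _ hiso)

lemma W_inr_of_isPushout {A X B D D' : C} {i : A ⟶ B} {f : A ⟶ X}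
    {g : B ⟶ D} {j : X ⟶ D} {g' : B ⟶ D'} {j' : X ⟶ D'}
    (h : IsPushout i f g j) (h' : IsPushout i f g' j') (hj : P.W j) : P.W j' := by
  obtain ⟨φ, hiso, _, h2⟩ := isPushout_compare h h'
  rw [← h2]
  exact P.W_comp _ _ hj (P.iso_W _ hiso)

/-- Brown's factorization lemma: a weak equivalence between cofibrant objects factors
as a trivial cofibration followed by a weak equivalence admitting a trivial cofibration
as a section. -/
lemma brown {Z X : C} (p : Z ⟶ X) (hZ : P.Cofibrant Z) (hX : P.Cofibrant X) (hp : P.W p) :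
    ∃ (M : C) (m : Z ⟶ M) (π : M ⟶ X) (s : X ⟶ M),
      P.Cofibrant M ∧ P.Cof m ∧ P.W m ∧ P.Cof s ∧ P.W s ∧
      m ≫ π = p ∧ s ≫ π = 𝟙 X ∧ P.W π := by
  obtain ⟨CP, inl, inr, hCP⟩ :=
    P.pushout_exists (initial.to Z) (initial.to X) hZ P.initial_cofibrant hX
  have hinr : P.Cof inr :=
    P.pushout_cof (initial.to Z) (initial.to X) inl inr hZ P.initial_cofibrant hX hCP
  have hinl : P.Cof inl :=
    P.pushout_cof (initial.to X) (initial.to Z) inr inl hX P.initial_cofibrant hZ hCP.flip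
  have hCPc : P.Cofibrant CP := P.cofibrant_of inl hZ hinl
  have hw : initial.to Z ≫ p = initial.to X ≫ 𝟙 X := initial.hom_ext _ _
  obtain ⟨M, k, r, hk, hr, hkr⟩ := P.factorization (hCP.desc p (𝟙 X) hw) hCPc
  refine ⟨M, inl ≫ k, r, inr ≫ k, P.cofibrant_of k hCPc hk,
    P.cof_comp _ _ hinl hk, ?_, P.cof_comp _ _ hinr hk, ?_, ?_, ?_, hr⟩
  · apply P.W_cancel_right _ r hr
    rw [Category.assoc, hkr, hCP.inl_desc]
    exact hp
  · apply P.W_cancel_right _ r hr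
    rw [Category.assoc, hkr, hCP.inr_desc]
    exact P.W_id X
  · rw [Category.assoc, hkr, hCP.inl_desc]
  · rw [Category.assoc, hkr, hCP.inr_desc]

/-- The key step: assuming CF3 (2), the pushout of a weak equivalence `π` admitting a
trivial cofibration section along a cofibration is a weak equivalence. -/
lemma sectionCase (hCF : P.CF3Two) {X M E₁ Q : C} (π : M ⟶ X) (s : X ⟶ M)
    (hs : P.Cof s) (hsW : P.W s) (hsπ : s ≫ π = 𝟙 X)
    (hM : P.Cofibrant M) (hX : P.Cofibrant X)
    {c₁ : M ⟶ E₁} (hc₁ : P.Cof c₁)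
    {pb : E₁ ⟶ Q} {cb : X ⟶ Q} (sq : IsPushout c₁ π pb cb) : P.W pb := by
  have hE₁ : P.Cofibrant E₁ := P.cofibrant_of c₁ hM hc₁
  have hcb : P.Cof cb := P.pushout_cof c₁ π pb cb hc₁ hM hX sq
  have hQ : P.Cofibrant Q := P.cofibrant_of cb hX hcb
  have hchc : P.Cof (s ≫ c₁) := P.cof_comp s c₁ hs hc₁
  -- U := pushout of (s, s ≫ c₁)
  obtain ⟨U, ch', s', squ⟩ := P.pushout_exists s (s ≫ c₁) hs hX hE₁
  have hs'W : P.W s' := hCF s (s ≫ c₁) ch' s' hs hsW hX hE₁ squ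
  have hs'c : P.Cof s' := P.pushout_cof s (s ≫ c₁) ch' s' hs hX hE₁ squ
  have hch' : P.Cof ch' := P.pushout_cof (s ≫ c₁) s s' ch' hchc hX hM squ.flip
  have hU : P.Cofibrant U := P.cofibrant_of ch' hM hch'
  -- μ : U ⟶ E₁ with ch' ≫ μ = c₁ and s' ≫ μ = 𝟙
  have hμw : s ≫ c₁ = (s ≫ c₁) ≫ 𝟙 E₁ := by rw [Category.comp_id]
  set μ : U ⟶ E₁ := squ.desc c₁ (𝟙 E₁) hμw with hμdef
  have hch'μ : ch' ≫ μ = c₁ := squ.inl_desc _ _ _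
  have hs'μ : s' ≫ μ = 𝟙 E₁ := squ.inr_desc _ _ _
  have hμW : P.W μ := P.W_cancel_left s' μ hs'W (by rw [hs'μ]; exact P.W_id E₁)
  -- V := pushout of π along ch'
  obtain ⟨V, πU, cV, sq4⟩ := P.pushout_exists ch' π hch' hM hX
  have hcV : P.Cof cV := P.pushout_cof ch' π πU cV hch' hM hX sq4
  have hV : P.Cofibrant V := P.cofibrant_of cV hX hcV
  -- s' ≫ πU is an isomorphism, hence πU is a weak equivalence
  have tot5 : IsPushout (s ≫ c₁) (𝟙 X) (s' ≫ πU) cV := by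
    have h := squ.flip.paste_vert sq4
    rwa [hsπ] at h
  have hπU : P.W πU := by
    have hρw : (s ≫ c₁) ≫ 𝟙 E₁ = 𝟙 X ≫ (s ≫ c₁) := by simp
    set ρ : V ⟶ E₁ := tot5.desc (𝟙 E₁) (s ≫ c₁) hρw with hρdef
    have h1 : (s' ≫ πU) ≫ ρ = 𝟙 E₁ := tot5.inl_desc _ _ _
    have h2 : cV ≫ ρ = s ≫ c₁ := tot5.inr_desc _ _ _
    have hkey : (s ≫ c₁) ≫ s' ≫ πU = cV := by
      rw [← Category.assoc, ← squ.w, Category.assoc, sq4.w, ← Category.assoc, hsπ,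
        Category.id_comp]
    have h3 : ρ ≫ (s' ≫ πU) = 𝟙 V := by
      apply tot5.hom_ext
      · rw [Category.comp_id, ← Category.assoc, h1, Category.id_comp]
      · rw [Category.comp_id, ← Category.assoc, h2, hkey]
    have hiso : IsIso (s' ≫ πU) := ⟨ρ, h1, h3⟩
    exact P.W_cancel_left s' πU hs'W (P.iso_W _ hiso)
  -- Brown-type factorization of μ under M
  obtain ⟨CPM, a, b, sq6⟩ := P.pushout_exists ch' c₁ hch' hM hE₁
  have hac : P.Cof a := P.pushout_cof c₁ ch' b a hc₁ hM hU sq6.flip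
  have hbc : P.Cof b := P.pushout_cof ch' c₁ a b hch' hM hE₁ sq6
  have hCPM : P.Cofibrant CPM := P.cofibrant_of a hU hac
  have hφ₁w : ch' ≫ μ = c₁ ≫ 𝟙 E₁ := by rw [hch'μ, Category.comp_id]
  set φ₁ : CPM ⟶ E₁ := sq6.desc μ (𝟙 E₁) hφ₁w with hφ₁def
  have haφ : a ≫ φ₁ = μ := sq6.inl_desc _ _ _
  have hbφ : b ≫ φ₁ = 𝟙 E₁ := sq6.inr_desc _ _ _
  obtain ⟨W₀, k₂, ω, hk₂, hω, hk₂ω⟩ := P.factorization φ₁ hCPM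
  set mU : U ⟶ W₀ := a ≫ k₂ with hmUdef
  set mE : E₁ ⟶ W₀ := b ≫ k₂ with hmEdef
  have hmUc : P.Cof mU := P.cof_comp _ _ hac hk₂
  have hmEc : P.Cof mE := P.cof_comp _ _ hbc hk₂
  have hmUω : mU ≫ ω = μ := by rw [hmUdef, Category.assoc, hk₂ω, haφ]
  have hmEω : mE ≫ ω = 𝟙 E₁ := by rw [hmEdef, Category.assoc, hk₂ω, hbφ]
  have hmUW : P.W mU := P.W_cancel_right mU ω hω (by rw [hmUω]; exact hμW)
  have hmEW : P.W mE := P.W_cancel_right mE ω hω (by rw [hmEω]; exact P.W_id E₁)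
  have hσeq : ch' ≫ mU = c₁ ≫ mE := by
    rw [hmUdef, hmEdef, ← Category.assoc, ← Category.assoc, sq6.w]
  have hσc : P.Cof (ch' ≫ mU) := by rw [hσeq]; exact P.cof_comp _ _ hc₁ hmEc
  -- FW := pushout of π along ch' ≫ mU
  obtain ⟨FW, pW, cW, sq7⟩ := P.pushout_exists (ch' ≫ mU) π hσc hM hX
  -- FmU : V ⟶ FW
  have hFmUw : ch' ≫ (mU ≫ pW) = π ≫ cW := by rw [← Category.assoc, sq7.w]
  set FmU : V ⟶ FW := sq4.desc (mU ≫ pW) cW hFmUw with hFmUdef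
  have h8a : πU ≫ FmU = mU ≫ pW := sq4.inl_desc _ _ _
  have h8b : cV ≫ FmU = cW := sq4.inr_desc _ _ _
  have sq8 : IsPushout mU πU pW FmU := by
    have big := sq7.flip
    rw [← h8b] at big
    exact (IsPushout.of_top big h8a sq4.flip).flip
  have hFmU : P.W FmU := hCF mU πU pW FmU hmUc hmUW hU hV sq8
  -- FmE : Q ⟶ FW
  have hFmEw : c₁ ≫ (mE ≫ pW) = π ≫ cW := by
    rw [← Category.assoc, ← hσeq]
    exact sq7.w
  set FmE : Q ⟶ FW := sq.desc (mE ≫ pW) cW hFmEw with hFmEdef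
  have h9a : pb ≫ FmE = mE ≫ pW := sq.inl_desc _ _ _
  have h9b : cb ≫ FmE = cW := sq.inr_desc _ _ _
  have sq9 : IsPushout mE pb pW FmE := by
    have big := sq7.flip
    rw [hσeq, ← h9b] at big
    exact (IsPushout.of_top big h9a sq.flip).flip
  have hFmE : P.W FmE := hCF mE pb pW FmE hmEc hmEW hE₁ hQ sq9
  -- Fω : FW ⟶ Q
  have hFωw : (ch' ≫ mU) ≫ (ω ≫ pb) = π ≫ cb := by
    rw [hσeq, Category.assoc, ← Category.assoc mE ω pb, hmEω, Category.id_comp, sq.w]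
  set Fω : FW ⟶ Q := sq7.desc (ω ≫ pb) cb hFωw with hFωdef
  have h10a : pW ≫ Fω = ω ≫ pb := sq7.inl_desc _ _ _
  have h10b : cW ≫ Fω = cb := sq7.inr_desc _ _ _
  have h11 : FmE ≫ Fω = 𝟙 Q := by
    apply sq.hom_ext
    · rw [← Category.assoc, h9a, Category.assoc, h10a, ← Category.assoc, hmEω,
        Category.id_comp, Category.comp_id]
    · rw [← Category.assoc, h9b, h10b, Category.comp_id]
  have hFω : P.W Fω := P.W_cancel_left FmE Fω hFmE (by rw [h11]; exact P.W_id Q)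
  have key : πU ≫ (FmU ≫ Fω) = μ ≫ pb := by
    rw [← Category.assoc, h8a, Category.assoc, h10a, ← Category.assoc, hmUω]
  have hμpb : P.W (μ ≫ pb) := by
    rw [← key]
    exact P.W_comp _ _ hπU (P.W_comp _ _ hFmU hFω)
  exact P.W_cancel_left μ pb hμW hμpb

lemma excision_of_cf3two (hCF : P.CF3Two) : P.Excision := by
  intro A B X D i f g j hi hA hX hf sq
  obtain ⟨Z, q, p₂, hq, hp₂, hqp⟩ := P.factorization f hA
  have hqW : P.W q := P.W_cancel_right q p₂ hp₂ (by rwa [hqp])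
  have hZ : P.Cofibrant Z := P.cofibrant_of q hA hq
  have hB : P.Cofibrant B := P.cofibrant_of i hA hi
  obtain ⟨D₁, g₁, j₁, sq1⟩ := P.pushout_exists i q hi hA hZ
  have hg₁ : P.W g₁ := hCF q i j₁ g₁ hq hqW hA hB sq1.flip
  have hj₁ : P.Cof j₁ := P.pushout_cof i q g₁ j₁ hi hA hZ sq1
  have hD₁ : P.Cofibrant D₁ := P.cofibrant_of j₁ hZ hj₁
  obtain ⟨M, m, π, s, hMc, hm, hmW, hs, hsW, hmπ, hsπ, hπ⟩ := P.brown p₂ hZ hX hp₂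
  obtain ⟨D₂, g₂, j₂, sq2⟩ := P.pushout_exists j₁ m hj₁ hZ hMc
  have hg₂ : P.W g₂ := hCF m j₁ j₂ g₂ hm hmW hZ hD₁ sq2.flip
  have hj₂ : P.Cof j₂ := P.pushout_cof j₁ m g₂ j₂ hj₁ hZ hMc sq2
  obtain ⟨Q₂, pb, cb, sq3⟩ := P.pushout_exists j₂ π hj₂ hMc hX
  have hpb : P.W pb := P.sectionCase hCF π s hs hsW hsπ hMc hX hj₂ sq3
  have big23 : IsPushout j₁ p₂ (g₂ ≫ pb) cb := by
    have h := sq2.paste_vert sq3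
    rwa [hmπ] at h
  have big : IsPushout i f (g₁ ≫ (g₂ ≫ pb)) cb := by
    have h := sq1.paste_vert big23
    rwa [hqp] at h
  exact P.W_inl_of_isPushout big sq
    (P.W_comp _ _ hg₁ (P.W_comp _ _ hg₂ hpb))

lemma cf3two_of_excision (hE : P.Excision) : P.CF3Two := by
  intro A B X D i f g j hi hiW hA hX sq
  obtain ⟨Z, f₁, f₂, hf₁, hf₂, hf₁₂⟩ := P.factorization f hA
  have hZ : P.Cofibrant Z := P.cofibrant_of f₁ hA hf₁
  have hB : P.Cofibrant B := P.cofibrant_of i hA hi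
  obtain ⟨D₁, zD, bD, sq1⟩ := P.pushout_exists f₁ i hf₁ hA hB
  have hzDW : P.W zD := hE f₁ i zD bD hf₁ hA hB hiW sq1
  have hzDc : P.Cof zD := P.pushout_cof i f₁ bD zD hi hA hZ sq1.flip
  obtain ⟨D₂, dD, xD, sq2⟩ := P.pushout_exists zD f₂ hzDc hZ hX
  have hdD : P.W dD := hE zD f₂ dD xD hzDc hZ hX hf₂ sq2
  have hxD : P.W xD := by
    apply P.W_cancel_left f₂ xD hf₂
    rw [← sq2.w]
    exact P.W_comp _ _ hzDW hdD
  have big : IsPushout i f (bD ≫ dD) xD := by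
    have h := sq1.flip.paste_vert sq2
    rwa [hf₁₂] at h
  exact P.W_inr_of_isPushout big sq hxD

/-- The gluing lemma in the special case where both spans consist of cofibrations. -/
lemma gluing_cofleg (hE : P.Excision) {A₁ A₂ A₃ A₄ B₁ B₂ B₃ B₄ : C}
    (f₁₂ : A₁ ⟶ A₂) (f₁₃ : A₁ ⟶ A₃) (f₂₄ : A₂ ⟶ A₄) (f₃₄ : A₃ ⟶ A₄)
    (g₁₂ : B₁ ⟶ B₂) (g₁₃ : B₁ ⟶ B₃) (g₂₄ : B₂ ⟶ B₄) (g₃₄ : B₃ ⟶ B₄)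
    (u₁ : A₁ ⟶ B₁) (u₂ : A₂ ⟶ B₂) (u₃ : A₃ ⟶ B₃) (u₄ : A₄ ⟶ B₄)
    (topA : IsPushout f₁₂ f₁₃ f₂₄ f₃₄) (botB : IsPushout g₁₂ g₁₃ g₂₄ g₃₄)
    (hf₁₂ : P.Cof f₁₂) (hg₁₂ : P.Cof g₁₂) (hg₁₃ : P.Cof g₁₃)
    (hA₁ : P.Cofibrant A₁) (hA₃ : P.Cofibrant A₃)
    (hB₁ : P.Cofibrant B₁) (hB₃ : P.Cofibrant B₃)
    (c₁₂ : u₁ ≫ g₁₂ = f₁₂ ≫ u₂) (c₁₃ : u₁ ≫ g₁₃ = f₁₃ ≫ u₃)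
    (c₂₄ : u₂ ≫ g₂₄ = f₂₄ ≫ u₄) (c₃₄ : u₃ ≫ g₃₄ = f₃₄ ≫ u₄)
    (hu₁ : P.W u₁) (hu₂ : P.W u₂) (hu₃ : P.W u₃) : P.W u₄ := by
  have hB₂ : P.Cofibrant B₂ := P.cofibrant_of g₁₂ hB₁ hg₁₂
  have hf₃₄ : P.Cof f₃₄ := P.pushout_cof f₁₂ f₁₃ f₂₄ f₃₄ hf₁₂ hA₁ hA₃ topA
  -- P := pushout of u₁ along f₁₂
  obtain ⟨Pt, n₁, b₁, sqP⟩ := P.pushout_exists f₁₂ u₁ hf₁₂ hA₁ hB₁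
  have hn₁ : P.W n₁ := hE f₁₂ u₁ n₁ b₁ hf₁₂ hA₁ hB₁ hu₁ sqP
  have hb₁ : P.Cof b₁ := P.pushout_cof f₁₂ u₁ n₁ b₁ hf₁₂ hA₁ hB₁ sqP
  have hPt : P.Cofibrant Pt := P.cofibrant_of b₁ hB₁ hb₁
  set θ : Pt ⟶ B₂ := sqP.desc u₂ g₁₂ c₁₂.symm with hθdef
  have hn₁θ : n₁ ≫ θ = u₂ := sqP.inl_desc _ _ _
  have hb₁θ : b₁ ≫ θ = g₁₂ := sqP.inr_desc _ _ _
  have hθW : P.W θ := P.W_cancel_left n₁ θ hn₁ (by rw [hn₁θ]; exact hu₂)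
  -- P₄ := pushout of g₁₃ along b₁
  obtain ⟨P₄, m₁, m₂, sqP4⟩ := P.pushout_exists b₁ g₁₃ hb₁ hB₁ hB₃
  have hm₁ : P.Cof m₁ := P.pushout_cof g₁₃ b₁ m₂ m₁ hg₁₃ hB₁ hPt sqP4.flip
  -- α : A₄ ⟶ P₄
  have big1 : IsPushout f₁₂ (f₁₃ ≫ u₃) (n₁ ≫ m₁) m₂ := by
    have h := sqP.paste_vert sqP4
    rwa [c₁₃] at h
  have hαw : f₁₂ ≫ (n₁ ≫ m₁) = f₁₃ ≫ (u₃ ≫ m₂) := by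
    rw [big1.w, Category.assoc]
  set α : A₄ ⟶ P₄ := topA.desc (n₁ ≫ m₁) (u₃ ≫ m₂) hαw with hαdef
  have hαa : f₂₄ ≫ α = n₁ ≫ m₁ := topA.inl_desc _ _ _
  have hαb : f₃₄ ≫ α = u₃ ≫ m₂ := topA.inr_desc _ _ _
  have sqα : IsPushout f₃₄ u₃ α m₂ := by
    have big := big1
    rw [← hαa] at big
    exact IsPushout.of_top big hαb topA
  have hαW : P.W α := hE f₃₄ u₃ α m₂ hf₃₄ hA₃ hB₃ hu₃ sqα
  -- β : P₄ ⟶ B₄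
  have hβw : b₁ ≫ (θ ≫ g₂₄) = g₁₃ ≫ g₃₄ := by
    rw [← Category.assoc, hb₁θ, botB.w]
  set β : P₄ ⟶ B₄ := sqP4.desc (θ ≫ g₂₄) g₃₄ hβw with hβdef
  have hβa : m₁ ≫ β = θ ≫ g₂₄ := sqP4.inl_desc _ _ _
  have hβb : m₂ ≫ β = g₃₄ := sqP4.inr_desc _ _ _
  have sqβ : IsPushout m₁ θ β g₂₄ := by
    have big := botB.flip
    rw [← hb₁θ, ← hβb] at big
    exact IsPushout.of_top big hβa sqP4.flip
  have hβW : P.W β := hE m₁ θ β g₂₄ hm₁ hPt hB₂ hθW sqβ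
  -- u₄ = α ≫ β
  have hu₄ : u₄ = α ≫ β := by
    apply topA.hom_ext
    · calc f₂₄ ≫ u₄ = u₂ ≫ g₂₄ := c₂₄.symm
        _ = (n₁ ≫ θ) ≫ g₂₄ := by rw [hn₁θ]
        _ = n₁ ≫ (m₁ ≫ β) := by rw [Category.assoc, hβa]
        _ = (n₁ ≫ m₁) ≫ β := by rw [Category.assoc]
        _ = (f₂₄ ≫ α) ≫ β := by rw [hαa]
        _ = f₂₄ ≫ α ≫ β := by rw [Category.assoc]
    · calc f₃₄ ≫ u₄ = u₃ ≫ g₃₄ := c₃₄.symm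
        _ = u₃ ≫ (m₂ ≫ β) := by rw [hβb]
        _ = (u₃ ≫ m₂) ≫ β := by rw [Category.assoc]
        _ = (f₃₄ ≫ α) ≫ β := by rw [hαb]
        _ = f₃₄ ≫ α ≫ β := by rw [Category.assoc]
  rw [hu₄]
  exact P.W_comp _ _ hαW hβW

lemma gluing_of_excision (hE : P.Excision) : P.Gluing := by
  intro A₁ A₂ A₃ A₄ B₁ B₂ B₃ B₄ f₁₂ f₁₃ f₂₄ f₃₄ g₁₂ g₁₃ g₂₄ g₃₄ u₁ u₂ u₃ u₄
    topA botB hf₁₂ hg₁₂ hA₁ hA₃ hB₁ hB₃ c₁₂ c₁₃ c₂₄ c₃₄ hu₁ hu₂ hu₃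
  -- factor f₁₃ = cA ≫ rA
  obtain ⟨A₃', cA, rA, hcA, hrA, hcrA⟩ := P.factorization f₁₃ hA₁
  have hA₃' : P.Cofibrant A₃' := P.cofibrant_of cA hA₁ hcA
  obtain ⟨A₄s, e₂, e₃, sqA⟩ := P.pushout_exists f₁₂ cA hf₁₂ hA₁ hA₃'
  have he₃ : P.Cof e₃ := P.pushout_cof f₁₂ cA e₂ e₃ hf₁₂ hA₁ hA₃' sqA
  have hφAw : f₁₂ ≫ f₂₄ = cA ≫ (rA ≫ f₃₄) := by
    rw [topA.w, ← hcrA, Category.assoc]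
  set φA : A₄s ⟶ A₄ := sqA.desc f₂₄ (rA ≫ f₃₄) hφAw with hφAdef
  have hφA₁ : e₂ ≫ φA = f₂₄ := sqA.inl_desc _ _ _
  have hφA₂ : e₃ ≫ φA = rA ≫ f₃₄ := sqA.inr_desc _ _ _
  have sqφA : IsPushout e₃ rA φA f₃₄ := by
    have big := topA
    rw [← hcrA, ← hφA₁] at big
    exact IsPushout.of_top big hφA₂ sqA
  have hφAW : P.W φA := hE e₃ rA φA f₃₄ he₃ hA₃' hA₃ hrA sqφA
  -- B-side: B₃'' := pushout of u₁ along cA, then factor the induced map to B₃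
  obtain ⟨B₃'', t, c'', sqT⟩ := P.pushout_exists cA u₁ hcA hA₁ hB₁
  have hc'' : P.Cof c'' := P.pushout_cof cA u₁ t c'' hcA hA₁ hB₁ sqT
  have hB₃'' : P.Cofibrant B₃'' := P.cofibrant_of c'' hB₁ hc''
  have hψw : cA ≫ (rA ≫ u₃) = u₁ ≫ g₁₃ := by
    rw [← Category.assoc, hcrA, c₁₃]
  set ψ : B₃'' ⟶ B₃ := sqT.desc (rA ≫ u₃) g₁₃ hψw with hψdef
  have hψ₁ : t ≫ ψ = rA ≫ u₃ := sqT.inl_desc _ _ _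
  have hψ₂ : c'' ≫ ψ = g₁₃ := sqT.inr_desc _ _ _
  obtain ⟨B₃', c₂, rB, hc₂, hrB, hc₂rB⟩ := P.factorization ψ hB₃''
  set cB : B₁ ⟶ B₃' := c'' ≫ c₂ with hcBdef
  set u₃' : A₃' ⟶ B₃' := t ≫ c₂ with hu₃'def
  have hcB : P.Cof cB := P.cof_comp _ _ hc'' hc₂
  have hB₃' : P.Cofibrant B₃' := P.cofibrant_of cB hB₁ hcB
  have hcBrB : cB ≫ rB = g₁₃ := by rw [hcBdef, Category.assoc, hc₂rB, hψ₂]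
  have hu₃'rB : u₃' ≫ rB = rA ≫ u₃ := by rw [hu₃'def, Category.assoc, hc₂rB, hψ₁]
  have hu₃'W : P.W u₃' := P.W_cancel_right u₃' rB hrB
    (by rw [hu₃'rB]; exact P.W_comp _ _ hrA hu₃)
  have hcomm₁₃' : u₁ ≫ cB = cA ≫ u₃' := by
    rw [hcBdef, hu₃'def, ← Category.assoc, ← Category.assoc, sqT.w]
  obtain ⟨B₄s, e₂', e₃', sqB⟩ := P.pushout_exists g₁₂ cB hg₁₂ hB₁ hB₃'
  have he₃' : P.Cof e₃' := P.pushout_cof g₁₂ cB e₂' e₃' hg₁₂ hB₁ hB₃' sqB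
  have hφBw : g₁₂ ≫ g₂₄ = cB ≫ (rB ≫ g₃₄) := by
    rw [botB.w, ← hcBrB, Category.assoc]
  set φB : B₄s ⟶ B₄ := sqB.desc g₂₄ (rB ≫ g₃₄) hφBw with hφBdef
  have hφB₁ : e₂' ≫ φB = g₂₄ := sqB.inl_desc _ _ _
  have hφB₂ : e₃' ≫ φB = rB ≫ g₃₄ := sqB.inr_desc _ _ _
  have sqφB : IsPushout e₃' rB φB g₃₄ := by
    have big := botB
    rw [← hcBrB, ← hφB₁] at big
    exact IsPushout.of_top big hφB₂ sqB
  have hφBW : P.W φB := hE e₃' rB φB g₃₄ he₃' hB₃' hB₃ hrB sqφB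
  -- induced vertical map on the new pushouts
  have hu₄sw : f₁₂ ≫ (u₂ ≫ e₂') = cA ≫ (u₃' ≫ e₃') := by
    rw [← Category.assoc, ← c₁₂, Category.assoc, sqB.w, ← Category.assoc, hcomm₁₃',
      Category.assoc]
  set u₄s : A₄s ⟶ B₄s := sqA.desc (u₂ ≫ e₂') (u₃' ≫ e₃') hu₄sw with hu₄sdef
  have hu₄s₁ : e₂ ≫ u₄s = u₂ ≫ e₂' := sqA.inl_desc _ _ _
  have hu₄s₂ : e₃ ≫ u₄s = u₃' ≫ e₃' := sqA.inr_desc _ _ _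
  have hu₄sW : P.W u₄s :=
    P.gluing_cofleg hE f₁₂ cA e₂ e₃ g₁₂ cB e₂' e₃' u₁ u₂ u₃' u₄s sqA sqB
      hf₁₂ hg₁₂ hcB hA₁ hA₃' hB₁ hB₃' c₁₂ hcomm₁₃' hu₄s₁.symm hu₄s₂.symm hu₁ hu₂ hu₃'W
  -- compatibility and conclusion
  have hcompat : u₄s ≫ φB = φA ≫ u₄ := by
    apply sqA.hom_ext
    · rw [← Category.assoc, hu₄s₁, Category.assoc, hφB₁, ← Category.assoc, hφA₁, c₂₄]
    · rw [← Category.assoc, hu₄s₂, Category.assoc, hφB₂, ← Category.assoc, hu₃'rB,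
        ← Category.assoc, hφA₂, Category.assoc, Category.assoc, c₃₄]
  apply P.W_cancel_left φA u₄ hφAW
  rw [← hcompat]
  exact P.W_comp _ _ hu₄sW hφBW

lemma cf3two_of_gluing (hG : P.Gluing) : P.CF3Two := by
  intro A B X D i f g j hi hiW hA hX sq
  exact hG (𝟙 A) f f (𝟙 X) i f g j (𝟙 A) i (𝟙 X) j
    (IsPushout.id_horiz f) sq (P.iso_cof _ inferInstance hA) hi hA hX hA hX
    (by simp) (by simp) sq.w (by simp) (P.W_id A) hiW (P.W_id X)

end PrecofBase

/-- In the presence of CF1, CF2, CF3 (1) and CF4, axiom CF3 (2), the Gluing Lemma and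
Excision are equivalent. -/
theorem cf3_two_iff_gluing_iff_excision (P : PrecofBase C) :
    (P.CF3Two ↔ P.Gluing) ∧ (P.CF3Two ↔ P.Excision) := by
  constructor
  · exact ⟨fun h => P.gluing_of_excision (P.excision_of_cf3two h), P.cf3two_of_gluing⟩
  · exact ⟨P.excision_of_cf3two, P.cf3two_of_excision⟩
end

section
/- In a cofibration category (axioms CF1–CF6), given a map of countable direct sequences of cofibrations (aₙ : Aₙ → Aₙ₊₁ and bₙ : Bₙ → Bₙ₊₁ cofibrations, A₀ and B₀ cofibrant) with each component fₙ : Aₙ → Bₙ a weak equivalence, the colimit map colim fₙ : colim Aₙ → colim Bₙ is a weak equivalence between cofibrant objects. -/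
open CategoryTheory CategoryTheory.Limits

universe w v u

variable (C : Type u) [Category.{v} C] [HasInitial C]

variable {C}

variable (C) in
/-- An Anderson–Brown–Cisinski cofibration category: a precofibration category (CF1–CF4)
which moreover satisfies CF5 (small coproducts of (trivial) cofibrations with cofibrant
domains exist and are (trivial) cofibrations) and CF6 (countable transfinite compositions
of (trivial) cofibrations starting at a cofibrant object exist and are (trivial)
cofibrations). -/
structure CofCat extends PrecofCat C where
  /-- CF5 -/
  cf5 : ∀ {I : Type v} (A B : I → C) (f : ∀ i, A i ⟶ B i),
    (∀ i, Cof (f i)) → (∀ i, Cof (initial.to (A i))) →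
    ∃ (SA SB : C) (ιA : ∀ i, A i ⟶ SA) (ιB : ∀ i, B i ⟶ SB) (g : SA ⟶ SB),
      (∀ (Z : C) (q : ∀ i, A i ⟶ Z), ∃! u : SA ⟶ Z, ∀ i, ιA i ≫ u = q i) ∧
      (∀ (Z : C) (q : ∀ i, B i ⟶ Z), ∃! u : SB ⟶ Z, ∀ i, ιB i ≫ u = q i) ∧
      Cof (initial.to SA) ∧ Cof (initial.to SB) ∧ Cof g ∧
      (∀ i, ιA i ≫ g = f i ≫ ιB i) ∧ ((∀ i, W (f i)) → W g)
  /-- CF6 -/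
  cf6 : ∀ (A : ℕ → C) (a : ∀ n, A n ⟶ A (n + 1)),
    (∀ n, Cof (a n)) → Cof (initial.to (A 0)) →
    ∃ (L : C) (ι : ∀ n, A n ⟶ L),
      (∀ n, a n ≫ ι (n + 1) = ι n) ∧
      (∀ (Z : C) (q : ∀ n, A n ⟶ Z), (∀ n, a n ≫ q (n + 1) = q n) →
        ∃! u : L ⟶ Z, ∀ n, ι n ≫ u = q n) ∧
      Cof (ι 0) ∧ ((∀ n, W (a n)) → W (ι 0))


namespace ABCGluing


lemma cof_target (P : CofCat C) {X Y : C} (f : X ⟶ Y) (hX : P.Cof (initial.to X))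
    (hf : P.Cof f) : P.Cof (initial.to Y) := by
  have h : initial.to Y = initial.to X ≫ f := initial.hom_ext _ _
  rw [h]
  exact P.cof_comp _ _ hX hf

lemma W_id (P : CofCat C) (X : C) : P.W (𝟙 X) := P.iso_W _ inferInstance

lemma seq_hom_ext {A : ℕ → C} {a : ∀ n, A n ⟶ A (n + 1)} {L : C} {ι : ∀ n, A n ⟶ L}
    (hι : ∀ n, a n ≫ ι (n + 1) = ι n)
    (hUP : ∀ (Z : C) (q : ∀ n, A n ⟶ Z), (∀ n, a n ≫ q (n + 1) = q n) →
      ∃! u : L ⟶ Z, ∀ n, ι n ≫ u = q n)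
    {T : C} (k l : L ⟶ T) (h : ∀ n, ι n ≫ k = ι n ≫ l) : k = l := by
  obtain ⟨u, -, huniq⟩ := hUP T (fun n => ι n ≫ l)
    (fun n => by rw [← Category.assoc, hι n])
  exact (huniq k h).trans (huniq l fun n => rfl).symm

lemma cofibrant_colim (P : CofCat C) (A : ℕ → C) (a : ∀ n, A n ⟶ A (n + 1))
    (ha : ∀ n, P.Cof (a n)) (hA0 : P.Cof (initial.to (A 0)))
    (L : C) (ι : ∀ n, A n ⟶ L) (hι : ∀ n, a n ≫ ι (n + 1) = ι n)
    (hUP : ∀ (Z : C) (q : ∀ n, A n ⟶ Z), (∀ n, a n ≫ q (n + 1) = q n) →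
      ∃! u : L ⟶ Z, ∀ n, ι n ≫ u = q n) : P.Cof (initial.to L) := by
  obtain ⟨L', ι', hι', hUP', hcof0, -⟩ := P.cf6 A a ha hA0
  obtain ⟨e, he, -⟩ := hUP' L ι hι
  obtain ⟨e', he', -⟩ := hUP L' ι' hι'
  have h1 : e ≫ e' = 𝟙 L' := by
    refine seq_hom_ext hι' hUP' _ _ (fun n => ?_)
    rw [← Category.assoc, he n, he' n, Category.comp_id]
  have h2 : e' ≫ e = 𝟙 L := by
    refine seq_hom_ext hι hUP _ _ (fun n => ?_)
    rw [← Category.assoc, he' n, he n, Category.comp_id]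
  have hiso : IsIso e := ⟨e', h1, h2⟩
  have hL' : P.Cof (initial.to L') := cof_target P (ι' 0) hA0 hcof0
  exact cof_target P e hL' (P.iso_cof e hiso hL')

end ABCGluing

namespace ABCGluing

/-- Level data for the Brown factorization of a map of sequences. -/
structure LD (P : CofCat C) (X Y : C) (f : X ⟶ Y) where
  Z : C
  p : X ⟶ Z
  q : Y ⟶ Z
  r : Z ⟶ Y
  cofZ : P.Cof (initial.to Z)
  cofp : P.Cof p
  Wp : P.W p
  cofq : P.Cof q
  Wq : P.W q
  Wr : P.W r
  pr : p ≫ r = f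
  qr : q ≫ r = 𝟙 Y

lemma base_exists (P : CofCat C) {X Y : C} (f : X ⟶ Y)
    (hXc : P.Cof (initial.to X)) (hYc : P.Cof (initial.to Y)) (hWf : P.W f) :
    Nonempty (LD P X Y f) := by
  obtain ⟨S, inX, inY, sqS⟩ := P.pushout_exists (initial.to X) (initial.to Y)
    hXc P.initial_cofibrant hYc
  have cofinY : P.Cof inY := P.pushout_cof _ _ _ _ hXc P.initial_cofibrant hYc sqS
  have cofinX : P.Cof inX := P.pushout_cof _ _ _ _ hYc P.initial_cofibrant hXc sqS.flip
  have cofS : P.Cof (initial.to S) := cof_target P inX hXc cofinX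
  obtain ⟨Z, e, r, cofe, Wr, her⟩ :=
    P.factorization (sqS.desc f (𝟙 Y) (initial.hom_ext _ _)) cofS
  have hpr : (inX ≫ e) ≫ r = f := by
    rw [Category.assoc, her, sqS.inl_desc]
  have hqr : (inY ≫ e) ≫ r = 𝟙 Y := by
    rw [Category.assoc, her, sqS.inr_desc]
  exact ⟨{
    Z := Z, p := inX ≫ e, q := inY ≫ e, r := r
    cofZ := cof_target P e cofS cofe
    cofp := P.cof_comp _ _ cofinX cofe
    Wp := P.W_cancel_right _ r Wr (by rw [hpr]; exact hWf)
    cofq := P.cof_comp _ _ cofinY cofe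
    Wq := P.W_cancel_right _ r Wr (by rw [hqr]; exact W_id P Y)
    Wr := Wr, pr := hpr, qr := hqr }⟩

lemma step_exists (P : CofCat C) {X X' Y Y' : C} {f : X ⟶ Y} (aX : X ⟶ X') (bY : Y ⟶ Y')
    (f' : X' ⟶ Y') (hax : P.Cof aX) (hby : P.Cof bY)
    (hXc : P.Cof (initial.to X)) (hX'c : P.Cof (initial.to X'))
    (hYc : P.Cof (initial.to Y)) (hY'c : P.Cof (initial.to Y'))
    (hWf' : P.W f') (hsq : aX ≫ f' = f ≫ bY) (d : LD P X Y f) :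
    ∃ (d' : LD P X' Y' f') (z : d.Z ⟶ d'.Z),
      P.Cof z ∧ aX ≫ d'.p = d.p ≫ z ∧ bY ≫ d'.q = d.q ≫ z ∧ d.r ≫ bY = z ≫ d'.r ∧
      (∃ (M : C) (φ : d.Z ⟶ M) (ψ : X' ⟶ M) (μ : M ⟶ d'.Z),
        IsPushout d.p aX φ ψ ∧ P.Cof μ ∧ P.W μ ∧ φ ≫ μ = z ∧ ψ ≫ μ = d'.p) ∧
      (∃ (M : C) (φ : d.Z ⟶ M) (ψ : Y' ⟶ M) (μ : M ⟶ d'.Z),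
        IsPushout d.q bY φ ψ ∧ P.Cof μ ∧ P.W μ ∧ φ ≫ μ = z ∧ ψ ≫ μ = d'.q) := by
  obtain ⟨MA, φ, ψ, sqA⟩ := P.pushout_exists d.p aX d.cofp hXc hX'c
  have cofψ : P.Cof ψ := P.pushout_cof _ _ _ _ d.cofp hXc hX'c sqA
  have Wψ : P.W ψ := P.pushout_triv_cof _ _ _ _ d.cofp d.Wp hXc hX'c sqA
  have cofφ : P.Cof φ := P.pushout_cof _ _ _ _ hax hXc d.cofZ sqA.flip
  have cofMA : P.Cof (initial.to MA) := cof_target P φ d.cofZ cofφ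
  obtain ⟨N, gB, jN, sqN⟩ := P.pushout_exists bY (d.q ≫ φ) hby hYc cofMA
  have cofjN : P.Cof jN := P.pushout_cof _ _ _ _ hby hYc cofMA sqN
  have cofgB : P.Cof gB :=
    P.pushout_cof _ _ _ _ (P.cof_comp _ _ d.cofq cofφ) hYc hY'c sqN.flip
  have cofN : P.Cof (initial.to N) := cof_target P gB hY'c cofgB
  -- the comparison map to Y'
  have wM : d.p ≫ d.r ≫ bY = aX ≫ f' := by
    rw [← Category.assoc, d.pr, hsq]
  set dM : MA ⟶ Y' := sqA.desc (d.r ≫ bY) f' wM with hdM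
  have wN : bY ≫ 𝟙 Y' = (d.q ≫ φ) ≫ dM := by
    rw [Category.comp_id, Category.assoc, sqA.inl_desc, ← Category.assoc, d.qr,
      Category.id_comp]
  set dN : N ⟶ Y' := sqN.desc (𝟙 Y') dM wN with hdN
  obtain ⟨Z', e, r', cofe, Wr', her⟩ := P.factorization dN cofN
  set z : d.Z ⟶ Z' := φ ≫ (jN ≫ e) with hz
  set p' : X' ⟶ Z' := ψ ≫ (jN ≫ e) with hp'
  set q' : Y' ⟶ Z' := gB ≫ e with hq'
  have hjNd : jN ≫ dN = dM := sqN.inr_desc _ _ _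
  have hpr' : p' ≫ r' = f' := by
    rw [hp', Category.assoc, Category.assoc, her, hjNd, hdM, sqA.inr_desc]
  have hqr' : q' ≫ r' = 𝟙 Y' := by
    rw [hq', Category.assoc, her, hdN, sqN.inl_desc]
  have hzr : d.r ≫ bY = z ≫ r' := by
    rw [hz, Category.assoc, Category.assoc, her, hjNd, hdM, sqA.inl_desc]
  refine ⟨{
    Z := Z', p := p', q := q', r := r'
    cofZ := cof_target P e cofN cofe
    cofp := P.cof_comp _ _ cofψ (P.cof_comp _ _ cofjN cofe)
    Wp := P.W_cancel_right _ r' Wr' (by rw [hpr']; exact hWf')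
    cofq := P.cof_comp _ _ cofgB cofe
    Wq := P.W_cancel_right _ r' Wr' (by rw [hqr']; exact W_id P Y')
    Wr := Wr', pr := hpr', qr := hqr' }, z, ?_, ?_, ?_, hzr, ?_, ?_⟩
  · exact P.cof_comp _ _ cofφ (P.cof_comp _ _ cofjN cofe)
  · show aX ≫ p' = d.p ≫ z
    rw [hp', hz, ← Category.assoc, ← sqA.w]
    simp only [Category.assoc]
  · show bY ≫ q' = d.q ≫ z
    rw [hq', hz, ← Category.assoc, sqN.w]
    simp only [Category.assoc]
  · -- latch A
    refine ⟨MA, φ, ψ, jN ≫ e, sqA, P.cof_comp _ _ cofjN cofe, ?_, rfl, rfl⟩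
    refine P.W_cancel_left ψ (jN ≫ e) Wψ ?_
    show P.W p'
    exact P.W_cancel_right _ r' Wr' (by rw [hpr']; exact hWf')
  · -- latch B
    obtain ⟨MB, φB, ψB, sqB⟩ := P.pushout_exists d.q bY d.cofq hYc hY'c
    have cofφB : P.Cof φB := P.pushout_cof _ _ _ _ hby hYc d.cofZ sqB.flip
    have cofMB : P.Cof (initial.to MB) := cof_target P φB d.cofZ cofφB
    have wη : d.q ≫ φ ≫ jN = bY ≫ gB := by
      rw [← Category.assoc, sqN.w]
    set η : MB ⟶ N := sqB.desc (φ ≫ jN) gB wη with hη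
    have hψBη : ψB ≫ η = gB := sqB.inr_desc _ _ _
    have hφBη : φB ≫ η = φ ≫ jN := sqB.inl_desc _ _ _
    have sqQ : IsPushout φ φB jN η := by
      refine IsPushout.of_left ?_ hφBη.symm sqB
      rw [hψBη]
      exact sqN.flip
    have cofη : P.Cof η := P.pushout_cof _ _ _ _ cofφ d.cofZ cofMB sqQ
    have WψB : P.W ψB := P.pushout_triv_cof _ _ _ _ d.cofq d.Wq hYc hY'c sqB
    refine ⟨MB, φB, ψB, η ≫ e, sqB, P.cof_comp _ _ cofη cofe, ?_, ?_, ?_⟩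
    · refine P.W_cancel_left ψB (η ≫ e) WψB ?_
      rw [← Category.assoc, hψBη]
      show P.W q'
      exact P.W_cancel_right _ r' Wr' (by rw [hqr']; exact W_id P Y')
    · rw [hz, ← Category.assoc, hφBη]
      simp only [Category.assoc]
    · show ψB ≫ η ≫ e = q'
      rw [hq', ← Category.assoc, hψBη]

end ABCGluing

namespace ABCGluing

lemma construct (P : CofCat C) (A B : ℕ → C) (a : ∀ n, A n ⟶ A (n + 1))
    (b : ∀ n, B n ⟶ B (n + 1)) (f : ∀ n, A n ⟶ B n)
    (ha : ∀ n, P.Cof (a n)) (hb : ∀ n, P.Cof (b n))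
    (hAc : ∀ n, P.Cof (initial.to (A n))) (hBc : ∀ n, P.Cof (initial.to (B n)))
    (hf : ∀ n, P.W (f n)) (hcomm : ∀ n, a n ≫ f (n + 1) = f n ≫ b n) :
    ∃ (Z : ℕ → C) (z : ∀ n, Z n ⟶ Z (n + 1)) (p : ∀ n, A n ⟶ Z n)
      (q : ∀ n, B n ⟶ Z n) (r : ∀ n, Z n ⟶ B n),
      (∀ n, P.Cof (initial.to (Z n))) ∧ (∀ n, P.Cof (z n)) ∧
      (∀ n, P.Cof (p n)) ∧ (∀ n, P.W (p n)) ∧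
      (∀ n, P.Cof (q n)) ∧ (∀ n, P.W (q n)) ∧
      (∀ n, p n ≫ r n = f n) ∧ (∀ n, q n ≫ r n = 𝟙 (B n)) ∧
      (∀ n, a n ≫ p (n + 1) = p n ≫ z n) ∧ (∀ n, b n ≫ q (n + 1) = q n ≫ z n) ∧
      (∀ n, r n ≫ b n = z n ≫ r (n + 1)) ∧
      (∀ n, ∃ (M : C) (φ : Z n ⟶ M) (ψ : A (n + 1) ⟶ M) (μ : M ⟶ Z (n + 1)),
        IsPushout (p n) (a n) φ ψ ∧ P.Cof μ ∧ P.W μ ∧ φ ≫ μ = z n ∧ ψ ≫ μ = p (n + 1)) ∧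
      (∀ n, ∃ (M : C) (φ : Z n ⟶ M) (ψ : B (n + 1) ⟶ M) (μ : M ⟶ Z (n + 1)),
        IsPushout (q n) (b n) φ ψ ∧ P.Cof μ ∧ P.W μ ∧ φ ≫ μ = z n ∧ ψ ≫ μ = q (n + 1)) := by
  have F : ∀ n (d : LD P (A n) (B n) (f n)),
      PSigma fun (d' : LD P (A (n + 1)) (B (n + 1)) (f (n + 1))) =>
      PSigma fun (z : d.Z ⟶ d'.Z) =>
      P.Cof z ∧ a n ≫ d'.p = d.p ≫ z ∧ b n ≫ d'.q = d.q ≫ z ∧ d.r ≫ b n = z ≫ d'.r ∧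
      (∃ (M : C) (φ : d.Z ⟶ M) (ψ : A (n + 1) ⟶ M) (μ : M ⟶ d'.Z),
        IsPushout d.p (a n) φ ψ ∧ P.Cof μ ∧ P.W μ ∧ φ ≫ μ = z ∧ ψ ≫ μ = d'.p) ∧
      (∃ (M : C) (φ : d.Z ⟶ M) (ψ : B (n + 1) ⟶ M) (μ : M ⟶ d'.Z),
        IsPushout d.q (b n) φ ψ ∧ P.Cof μ ∧ P.W μ ∧ φ ≫ μ = z ∧ ψ ≫ μ = d'.q) := by
    intro n d
    have h := step_exists P (a n) (b n) (f (n + 1)) (ha n) (hb n)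
      (hAc n) (hAc (n + 1)) (hBc n) (hBc (n + 1)) (hf (n + 1)) (hcomm n) d
    exact ⟨h.choose, h.choose_spec.choose, h.choose_spec.choose_spec⟩
  let D : ∀ n, LD P (A n) (B n) (f n) := fun n =>
    Nat.rec ((base_exists P (f 0) (hAc 0) (hBc 0) (hf 0)).some) (fun n d => (F n d).1) n
  have hD : ∀ n, D (n + 1) = (F n (D n)).1 := fun _ => rfl
  refine ⟨fun n => (D n).Z, fun n => (F n (D n)).2.1, fun n => (D n).p,
    fun n => (D n).q, fun n => (D n).r,
    fun n => (D n).cofZ, fun n => (F n (D n)).2.2.1,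
    fun n => (D n).cofp, fun n => (D n).Wp, fun n => (D n).cofq, fun n => (D n).Wq,
    fun n => (D n).pr, fun n => (D n).qr,
    fun n => (F n (D n)).2.2.2.1, fun n => (F n (D n)).2.2.2.2.1,
    fun n => (F n (D n)).2.2.2.2.2.1,
    fun n => (F n (D n)).2.2.2.2.2.2.1, fun n => (F n (D n)).2.2.2.2.2.2.2⟩

end ABCGluing

namespace ABCGluing

/-- Key lemma: the colimit of a levelwise trivial cofibration of sequences which is
"Reedy" (latching maps are trivial cofibrations) is a weak equivalence. -/
lemma key (P : CofCat C) (X Z : ℕ → C) (x : ∀ n, X n ⟶ X (n + 1))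
    (z : ∀ n, Z n ⟶ Z (n + 1)) (p : ∀ n, X n ⟶ Z n)
    (hx : ∀ n, P.Cof (x n))
    (hXc : ∀ n, P.Cof (initial.to (X n))) (hZc : ∀ n, P.Cof (initial.to (Z n)))
    (hp : ∀ n, P.Cof (p n)) (hpW : ∀ n, P.W (p n))
    (hcomm : ∀ n, x n ≫ p (n + 1) = p n ≫ z n)
    (latch : ∀ n, ∃ (M : C) (φ : Z n ⟶ M) (ψ : X (n + 1) ⟶ M) (μ : M ⟶ Z (n + 1)),
      IsPushout (p n) (x n) φ ψ ∧ P.Cof μ ∧ P.W μ ∧ φ ≫ μ = z n ∧ ψ ≫ μ = p (n + 1))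
    (LX LZ : C) (ιX : ∀ n, X n ⟶ LX) (ιZ : ∀ n, Z n ⟶ LZ)
    (hιX : ∀ n, x n ≫ ιX (n + 1) = ιX n) (hιZ : ∀ n, z n ≫ ιZ (n + 1) = ιZ n)
    (hLX : ∀ (T : C) (q : ∀ n, X n ⟶ T), (∀ n, x n ≫ q (n + 1) = q n) →
      ∃! u : LX ⟶ T, ∀ n, ιX n ≫ u = q n)
    (hLZ : ∀ (T : C) (q : ∀ n, Z n ⟶ T), (∀ n, z n ≫ q (n + 1) = q n) →
      ∃! u : LZ ⟶ T, ∀ n, ιZ n ≫ u = q n)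
    (hLXc : P.Cof (initial.to LX))
    (u : LX ⟶ LZ) (hu : ∀ n, ιX n ≫ u = p n ≫ ιZ n) : P.W u := by
  choose M φ ψ μ sqM cofμ Wμ φμ ψμ using latch
  have hsqL : ∀ k, ∃ (L : C) (σ : Z k ⟶ L) (τ : LX ⟶ L), IsPushout (p k) (ιX k) σ τ :=
    fun k => P.pushout_exists (p k) (ιX k) (hp k) (hXc k) hLXc
  choose L σ τ sq using hsqL
  have cofτ : ∀ k, P.Cof (τ k) := fun k =>
    P.pushout_cof _ _ _ _ (hp k) (hXc k) hLXc (sq k)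
  have Wτ : ∀ k, P.W (τ k) := fun k =>
    P.pushout_triv_cof _ _ _ _ (hp k) (hpW k) (hXc k) hLXc (sq k)
  have cofLk : ∀ k, P.Cof (initial.to (L k)) := fun k => cof_target P (τ k) hLXc (cofτ k)
  have wlam : ∀ k, p k ≫ z k ≫ σ (k + 1) = ιX k ≫ τ (k + 1) := by
    intro k
    rw [← Category.assoc, ← hcomm k, Category.assoc, (sq (k + 1)).w, ← Category.assoc,
      hιX k]
  let lam : ∀ k, L k ⟶ L (k + 1) := fun k => (sq k).desc (z k ≫ σ (k + 1)) (τ (k + 1)) (wlam k)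
  have σlam : ∀ k, σ k ≫ lam k = z k ≫ σ (k + 1) := fun k => (sq k).inl_desc _ _ _
  have τlam : ∀ k, τ k ≫ lam k = τ (k + 1) := fun k => (sq k).inr_desc _ _ _
  have wρ : ∀ k, p k ≫ σ k = x k ≫ ιX (k + 1) ≫ τ k := by
    intro k
    rw [(sq k).w, ← Category.assoc, hιX k]
  let ρ : ∀ k, M k ⟶ L k := fun k => (sqM k).desc (σ k) (ιX (k + 1) ≫ τ k) (wρ k)
  have φρ : ∀ k, φ k ≫ ρ k = σ k := fun k => (sqM k).inl_desc _ _ _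
  have ψρ : ∀ k, ψ k ≫ ρ k = ιX (k + 1) ≫ τ k := fun k => (sqM k).inr_desc _ _ _
  have R : ∀ k, IsPushout (ψ k) (ιX (k + 1)) (ρ k) (τ k) := by
    intro k
    refine IsPushout.of_top ?_ (ψρ k) (sqM k)
    rw [hιX k, φρ k]
    exact sq k
  have Q : ∀ k, IsPushout (μ k) (ρ k) (σ (k + 1)) (lam k) := by
    intro k
    have hcom : μ k ≫ σ (k + 1) = ρ k ≫ lam k := by
      apply (sqM k).hom_ext
      · rw [← Category.assoc, φμ k, ← Category.assoc, φρ k, σlam k]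
      · rw [← Category.assoc, ψμ k, (sq (k + 1)).w, ← Category.assoc, ψρ k,
          Category.assoc, τlam k]
    refine IsPushout.of_left ?_ hcom (R k)
    rw [ψμ k, τlam k]
    exact sq (k + 1)
  have cofφ : ∀ k, P.Cof (φ k) := fun k =>
    P.pushout_cof _ _ _ _ (hx k) (hXc k) (hZc k) (sqM k).flip
  have cofM : ∀ k, P.Cof (initial.to (M k)) := fun k => cof_target P (φ k) (hZc k) (cofφ k)
  have coflam : ∀ k, P.Cof (lam k) := fun k =>
    P.pushout_cof _ _ _ _ (cofμ k) (cofM k) (cofLk k) (Q k)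
  have Wlam : ∀ k, P.W (lam k) := fun k =>
    P.pushout_triv_cof _ _ _ _ (cofμ k) (Wμ k) (cofM k) (cofLk k) (Q k)
  obtain ⟨T, ιT, hιT, hTUP, _, WιT0cond⟩ := P.cf6 L lam coflam (cofLk 0)
  have WιT0 : P.W (ιT 0) := WιT0cond Wlam
  let θ : ∀ k, L k ⟶ LZ := fun k => (sq k).desc (ιZ k) u (hu k).symm
  have σθ : ∀ k, σ k ≫ θ k = ιZ k := fun k => (sq k).inl_desc _ _ _
  have τθ : ∀ k, τ k ≫ θ k = u := fun k => (sq k).inr_desc _ _ _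
  have lamθ : ∀ k, lam k ≫ θ (k + 1) = θ k := by
    intro k
    apply (sq k).hom_ext
    · rw [← Category.assoc, σlam k, Category.assoc, σθ (k + 1), hιZ k, σθ k]
    · rw [← Category.assoc, τlam k, τθ (k + 1), τθ k]
  obtain ⟨Θ, hΘ, -⟩ := hTUP LZ θ lamθ
  obtain ⟨Ξ, hΞ, -⟩ := hLZ T (fun n => σ n ≫ ιT n)
    (fun n => by rw [← Category.assoc, ← σlam n, Category.assoc, hιT n])
  have ΞΘ : Ξ ≫ Θ = 𝟙 LZ := by
    refine seq_hom_ext hιZ hLZ _ _ (fun n => ?_)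
    rw [← Category.assoc, hΞ n, Category.assoc, hΘ n, σθ n, Category.comp_id]
  have τconst : ∀ k, τ k ≫ ιT k = τ 0 ≫ ιT 0 := by
    intro k
    induction k with
    | zero => rfl
    | succ k ih => rw [← τlam k, Category.assoc, hιT k, ih]
  have uΞ : u ≫ Ξ = τ 0 ≫ ιT 0 := by
    refine seq_hom_ext hιX hLX _ _ (fun n => ?_)
    rw [← Category.assoc, hu n, Category.assoc, hΞ n, ← Category.assoc, (sq n).w,
      Category.assoc, τconst n]
  have ΘΞ : Θ ≫ Ξ = 𝟙 T := by
    refine seq_hom_ext hιT hTUP _ _ (fun k => ?_)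
    rw [Category.comp_id, ← Category.assoc, hΘ k]
    apply (sq k).hom_ext
    · rw [← Category.assoc, σθ k, hΞ k]
    · rw [← Category.assoc, τθ k, uΞ, τconst k]
  have hiso : IsIso Θ := ⟨Ξ, ΘΞ, ΞΘ⟩
  have hueq : u = τ 0 ≫ ιT 0 ≫ Θ := by rw [hΘ 0, τθ 0]
  rw [hueq]
  exact P.W_comp _ _ (Wτ 0) (P.W_comp _ _ WιT0 (P.iso_W _ hiso))

end ABCGluing
/-- In a cofibration category, given a levelwise weak equivalence between countable
direct sequences of cofibrations starting at cofibrant objects, the induced map on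
colimits is a weak equivalence between cofibrant objects. -/
theorem colim_of_levelwise_weq (P : CofCat C)
    (A B : ℕ → C) (a : ∀ n, A n ⟶ A (n + 1)) (b : ∀ n, B n ⟶ B (n + 1))
    (f : ∀ n, A n ⟶ B n)
    (ha : ∀ n, P.Cof (a n)) (hb : ∀ n, P.Cof (b n))
    (hA₀ : P.Cof (initial.to (A 0))) (hB₀ : P.Cof (initial.to (B 0)))
    (hf : ∀ n, P.W (f n))
    (hcomm : ∀ n, a n ≫ f (n + 1) = f n ≫ b n)
    (LA LB : C) (ιA : ∀ n, A n ⟶ LA) (ιB : ∀ n, B n ⟶ LB)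
    (hιA : ∀ n, a n ≫ ιA (n + 1) = ιA n) (hιB : ∀ n, b n ≫ ιB (n + 1) = ιB n)
    (hLA : ∀ (Z : C) (q : ∀ n, A n ⟶ Z), (∀ n, a n ≫ q (n + 1) = q n) →
      ∃! u : LA ⟶ Z, ∀ n, ιA n ≫ u = q n)
    (hLB : ∀ (Z : C) (q : ∀ n, B n ⟶ Z), (∀ n, b n ≫ q (n + 1) = q n) →
      ∃! u : LB ⟶ Z, ∀ n, ιB n ≫ u = q n)
    (g : LA ⟶ LB) (hg : ∀ n, ιA n ≫ g = f n ≫ ιB n) :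
    P.W g ∧ P.Cof (initial.to LA) ∧ P.Cof (initial.to LB) := by
  classical
  have hAc : ∀ n, P.Cof (initial.to (A n)) := by
    intro n
    induction n with
    | zero => exact hA₀
    | succ n ih => exact ABCGluing.cof_target P (a n) ih (ha n)
  have hBc : ∀ n, P.Cof (initial.to (B n)) := by
    intro n
    induction n with
    | zero => exact hB₀
    | succ n ih => exact ABCGluing.cof_target P (b n) ih (hb n)
  have hLAc : P.Cof (initial.to LA) :=
    ABCGluing.cofibrant_colim P A a ha hA₀ LA ιA hιA hLA
  have hLBc : P.Cof (initial.to LB) :=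
    ABCGluing.cofibrant_colim P B b hb hB₀ LB ιB hιB hLB
  refine ⟨?_, hLAc, hLBc⟩
  obtain ⟨Z, z, p, q, r, hZc, hz, hcofp, hWp, hcofq, hWq, hpr, hqr, hap, hbq, hrb,
    latchA, latchB⟩ := ABCGluing.construct P A B a b f ha hb hAc hBc hf hcomm
  obtain ⟨LZ, ιZ, hιZ, hLZ, -, -⟩ := P.cf6 Z z hz (hZc 0)
  obtain ⟨u, hu, -⟩ := hLA LZ (fun n => p n ≫ ιZ n)
    (fun n => by rw [← Category.assoc, hap n, Category.assoc, hιZ n])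
  obtain ⟨w, hw, -⟩ := hLB LZ (fun n => q n ≫ ιZ n)
    (fun n => by rw [← Category.assoc, hbq n, Category.assoc, hιZ n])
  obtain ⟨v, hv, -⟩ := hLZ LB (fun n => r n ≫ ιB n)
    (fun n => by rw [← Category.assoc, ← hrb n, Category.assoc, hιB n])
  have huv : u ≫ v = g := by
    refine ABCGluing.seq_hom_ext hιA hLA _ _ (fun n => ?_)
    rw [← Category.assoc, hu n, Category.assoc, hv n, ← Category.assoc, hpr n, hg n]
  have hwv : w ≫ v = 𝟙 LB := by
    refine ABCGluing.seq_hom_ext hιB hLB _ _ (fun n => ?_)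
    rw [← Category.assoc, hw n, Category.assoc, hv n, ← Category.assoc, hqr n,
      Category.id_comp, Category.comp_id]
  have Wu : P.W u := ABCGluing.key P A Z a z p ha hAc hZc hcofp hWp hap latchA
    LA LZ ιA ιZ hιA hιZ hLA hLZ hLAc u hu
  have Ww : P.W w := ABCGluing.key P B Z b z q hb hBc hZc hcofq hWq hbq latchB
    LB LZ ιB ιZ hιB hιZ hLB hLZ hLBc w hw
  have Wv : P.W v := P.W_cancel_left w v Ww
    (by rw [hwv]; exact ABCGluing.W_id P LB)
  rw [← huv]
  exact P.W_comp u v Wu Wv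
end

section
/- In a left proper precofibration category: (a) every cofibration with cofibrant domain is a left proper map; (b) every map factors as a left proper map followed by a weak equivalence; (c) left proper maps that are weak equivalences are stable under pushout; consequently (M, W, PrCof) is again a precofibration category, where PrCof is the class of left proper maps. -/
open CategoryTheory CategoryTheory.Limits

universe w v u

variable (C : Type u) [Category.{v} C] [HasInitial C]

variable {C}

/-- A map `f : A ⟶ B` is left proper if for every map `a : A ⟶ X₁` and every weak
equivalence `r : X₁ ⟶ X₂`, the successive pushouts of `f` exist and the induced map
`B ⊔_A X₁ ⟶ B ⊔_A X₂` (the pushout of `r`) is again a weak equivalence. -/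
def PrecofCat.IsLeftProperMap (P : PrecofCat C) {A B : C} (f : A ⟶ B) : Prop :=
  (∀ {X : C} (a : A ⟶ X), ∃ (D : C) (h : X ⟶ D) (g : B ⟶ D), IsPushout a f h g) ∧
  (∀ {X₁ X₂ D₁ : C} (a : A ⟶ X₁) (r : X₁ ⟶ X₂) (h₁ : X₁ ⟶ D₁) (g₁ : B ⟶ D₁),
    IsPushout a f h₁ g₁ → P.W r →
    ∃ (D₂ : C) (h₂ : X₂ ⟶ D₂) (r' : D₁ ⟶ D₂), IsPushout r h₁ h₂ r' ∧ P.W r')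

/-- A precofibration category is left proper if for every cofibration `i : A ⟶ B` with
`A` cofibrant and every map `r : A ⟶ X`, the pushout exists, and if `r` is a weak
equivalence then so is its pushout `B ⟶ B ⊔_A X`. -/
def PrecofCat.LeftProper (P : PrecofCat C) : Prop :=
  ∀ {A B X : C} (i : A ⟶ B) (r : A ⟶ X), P.Cof i → P.Cofibrant A →
    (∃ (D : C) (j : X ⟶ D) (r' : B ⟶ D), IsPushout r i j r') ∧
    (∀ {D : C} (j : X ⟶ D) (r' : B ⟶ D), IsPushout r i j r' → P.W r → P.W r')


section Aux

variable {P : PrecofCat C}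

/-- Isomorphisms are left proper. -/
lemma lp_of_isIso {A B : C} (e : A ⟶ B) (he : IsIso e) : P.IsLeftProperMap e := by
  haveI := he
  constructor
  · intro X a
    exact ⟨X, 𝟙 X, inv e ≫ a, IsPushout.of_vert_isIso ⟨by simp⟩⟩
  · intro X₁ X₂ D₁ a r h₁ g₁ hsq hr
    have hinv : IsIso h₁ := by
      refine ⟨hsq.desc (𝟙 X₁) (inv e ≫ a) (by simp), hsq.inl_desc _ _ _, ?_⟩
      apply hsq.hom_ext
      · rw [reassoc_of% hsq.inl_desc (𝟙 X₁) (inv e ≫ a) (by simp)]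
        simp
      · rw [reassoc_of% hsq.inr_desc (𝟙 X₁) (inv e ≫ a) (by simp)]
        simp [← hsq.w]
    haveI := hinv
    refine ⟨X₂, 𝟙 X₂, inv h₁ ≫ r, IsPushout.of_vert_isIso ⟨by simp⟩, ?_⟩
    exact P.W_comp _ _ (P.iso_W _ inferInstance) hr

/-- Left proper maps are stable under pushout. -/
lemma lp_pushout {A B X D : C} {i : A ⟶ B} {f : A ⟶ X} {j : X ⟶ D} {g : B ⟶ D}
    (hi : P.IsLeftProperMap i) (sq : IsPushout f i j g) : P.IsLeftProperMap j := by
  constructor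
  · intro Y a
    obtain ⟨E, k, m, big⟩ := hi.1 (f ≫ a)
    exact ⟨E, k, _, IsPushout.of_left' big sq⟩
  · intro Y₁ Y₂ E₁ a r h₁ g₁ hsq hr
    exact hi.2 (f ≫ a) r h₁ (g ≫ g₁) (sq.paste_horiz hsq) hr

/-- Left proper maps are stable under composition. -/
lemma lp_comp {X Y Z : C} {f : X ⟶ Y} {g : Y ⟶ Z}
    (hf : P.IsLeftProperMap f) (hg : P.IsLeftProperMap g) : P.IsLeftProperMap (f ≫ g) := by
  constructor
  · intro T a
    obtain ⟨U, h, k, s1⟩ := hf.1 a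
    obtain ⟨V, h', k', s2⟩ := hg.1 k
    exact ⟨V, h ≫ h', k', s1.paste_vert s2⟩
  · intro T₁ T₂ E₁ a r h₁ g₁ hsq hr
    obtain ⟨U, hf1, kf, s1⟩ := hf.1 a
    have s2 := IsPushout.of_top' hsq s1
    obtain ⟨U₂, h₂, r₁, sA, wr₁⟩ := hf.2 a r hf1 kf s1 hr
    obtain ⟨E₂, h₂', r', sB, wr'⟩ := hg.2 kf r₁ _ g₁ s2 wr₁
    have comp := sA.paste_vert sB
    rw [s1.inl_desc] at comp
    exact ⟨E₂, h₂ ≫ h₂', r', comp, wr'⟩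

/-- Cofibrations with cofibrant domain are left proper. -/
lemma lp_of_cof (hP : P.LeftProper) {A B : C} (i : A ⟶ B) (hi : P.Cof i)
    (hA : P.Cofibrant A) : P.IsLeftProperMap i := by
  constructor
  · intro X a
    obtain ⟨D, j, r', hpo⟩ := (hP i a hi hA).1
    exact ⟨D, j, r', hpo⟩
  · intro X₁ X₂ D₁ a r h₁ g₁ hsq hr
    obtain ⟨X₁', c, s, hc, hs, hcs⟩ := P.factorization a hA
    have hX₁' : P.Cofibrant X₁' := by
      have : initial.to X₁' = initial.to A ≫ c := (initial.hom_ext _ _)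
      rw [PrecofCat.Cofibrant, this]
      exact P.cof_comp _ _ hA hc
    obtain ⟨P', p, b, pos⟩ := (hP i c hi hA).1
    have hp : P.Cof p := P.pushout_cof i c b p hi hA hX₁' pos.flip
    have hsq' : IsPushout (c ≫ s) i h₁ g₁ := by rwa [hcs]
    have σ := IsPushout.of_left' hsq' pos
    set b' := pos.desc (s ≫ h₁) g₁ (by rw [← Category.assoc, hsq'.w]) with hb'
    have wb' : P.W b' := (hP p s hp hX₁').2 h₁ b' σ hs
    obtain ⟨E₂, j₂, t₂, τsq⟩ := (hP p (s ≫ r) hp hX₁').1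
    have wt₂ : P.W t₂ := (hP p (s ≫ r) hp hX₁').2 j₂ t₂ τsq (P.W_comp _ _ hs hr)
    have final := IsPushout.of_left' τsq σ
    refine ⟨E₂, j₂, _, final, ?_⟩
    have hcomp : b' ≫ σ.desc (r ≫ j₂) t₂ (by rw [← Category.assoc, τsq.w]) = t₂ :=
      σ.inr_desc _ _ _
    exact P.W_cancel_left b' _ wb' (by rw [hcomp]; exact wt₂)

/-- Cofibrant replacement. -/
lemma cof_replacement (P : PrecofCat C) (A : C) :
    ∃ (A₀ : C) (q : A₀ ⟶ A), P.Cofibrant A₀ ∧ P.W q := by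
  obtain ⟨A₀, f', q, hcof, hq, _⟩ := P.factorization (initial.to A) P.initial_cofibrant
  refine ⟨A₀, q, ?_, hq⟩
  have : initial.to A₀ = initial.to (⊥_ C) ≫ f' := (initial.hom_ext _ _)
  rw [PrecofCat.Cofibrant, this]
  exact P.cof_comp _ _ P.initial_cofibrant hcof

/-- Part (b): factorization as a left proper map followed by a weak equivalence. -/
lemma lp_factorization (hP : P.LeftProper) {A B : C} (f : A ⟶ B) :
    ∃ (X : C) (f' : A ⟶ X) (r : X ⟶ B), P.IsLeftProperMap f' ∧ P.W r ∧ f' ≫ r = f := by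
  obtain ⟨A₀, q, hA₀, hq⟩ := cof_replacement P A
  obtain ⟨Z, c, s, hc, hs, hcs⟩ := P.factorization (q ≫ f) hA₀
  obtain ⟨Pb, v, w, vsq⟩ := (hP c q hc hA₀).1
  have hw : P.W w := (hP c q hc hA₀).2 v w vsq hq
  have hv : P.IsLeftProperMap v := lp_pushout (lp_of_cof hP c hc hA₀) vsq
  refine ⟨Pb, v, vsq.desc f s hcs.symm, hv, ?_, vsq.inl_desc _ _ _⟩
  exact P.W_cancel_left w _ hw (by rw [vsq.inr_desc]; exact hs)

/-- Part (c): a pushout of a trivial left proper map is a weak equivalence. -/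
lemma lp_triv_pushout (hP : P.LeftProper) {A B X D : C} {i : A ⟶ B} {f : A ⟶ X}
    {j : X ⟶ D} {g : B ⟶ D} (hi : P.IsLeftProperMap i) (hwi : P.W i)
    (sq : IsPushout f i j g) : P.W j := by
  obtain ⟨A₀, q, hA₀, hq⟩ := cof_replacement P A
  obtain ⟨X', c, s, hc, hs, hcs⟩ := P.factorization (q ≫ f) hA₀
  obtain ⟨Pb, v, w, vsq⟩ := (hP c q hc hA₀).1
  have hw : P.W w := (hP c q hc hA₀).2 v w vsq hq
  set τ := vsq.desc f s hcs.symm with hτ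
  have hvτ : v ≫ τ = f := vsq.inl_desc _ _ _
  have hwτ : w ≫ τ = s := vsq.inr_desc _ _ _
  have wτ : P.W τ := P.W_cancel_left w τ hw (by rw [hwτ]; exact hs)
  obtain ⟨Q, ht, gt, psq⟩ := hi.1 v
  -- W ht (the pushout of i along v)
  have comp := vsq.paste_horiz psq.flip
  have hwcomp : P.W (w ≫ ht) := (hP c (q ≫ i) hc hA₀).2 gt (w ≫ ht) comp
    (P.W_comp _ _ hq hwi)
  have wht : P.W ht := P.W_cancel_left w ht hw hwcomp
  -- the given square, rebased
  have sq' : IsPushout (v ≫ τ) i j g := by rwa [hvτ]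
  have ρsq := IsPushout.of_left' sq' psq
  obtain ⟨D₂, h₂, r'', σsq, wr''⟩ := hi.2 v τ ht gt psq wτ
  have wh₂ : P.W h₂ := by
    have : P.W (τ ≫ h₂) := by rw [σsq.w]; exact P.W_comp _ _ wht wr''
    exact P.W_cancel_left τ h₂ wτ this
  rw [← σsq.inl_isoIsPushout_hom _ _ ρsq]
  exact P.W_comp _ _ wh₂ (P.iso_W _ inferInstance)

end Aux

/-- In a left proper precofibration category: (a) cofibrations with cofibrant domain
are left proper; (b) every map factors as a left proper map followed by a weak
equivalence; (c) trivial left proper maps are stable under pushout; (d) the left proper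
maps give a new precofibration structure with the same weak equivalences. -/
theorem left_proper_structure (P : PrecofCat C) (hP : P.LeftProper) :
    (∀ {A B : C} (i : A ⟶ B), P.Cof i → P.Cofibrant A → P.IsLeftProperMap i) ∧
    (∀ {A B : C} (f : A ⟶ B), ∃ (X : C) (f' : A ⟶ X) (r : X ⟶ B),
        P.IsLeftProperMap f' ∧ P.W r ∧ f' ≫ r = f) ∧
    (∀ {A B X D : C} (i : A ⟶ B) (f : A ⟶ X) (j : X ⟶ D) (g : B ⟶ D),
        P.IsLeftProperMap i → P.W i → IsPushout f i j g →
        P.IsLeftProperMap j ∧ P.W j) ∧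
    (∃ (Q : PrecofCat C), Q.W = P.W ∧
        Q.Cof = (fun _ _ f => P.IsLeftProperMap f)) := by
  refine ⟨fun i hi hA => lp_of_cof hP i hi hA, fun f => lp_factorization hP f,
    fun i f j g hi hwi hpo => ⟨lp_pushout hi hpo, lp_triv_pushout hP hi hwi hpo⟩, ?_⟩
  refine ⟨{
      W := P.W
      Cof := fun _ _ f => P.IsLeftProperMap f
      cof_comp := fun f g hf hg => lp_comp hf hg
      initial_cofibrant := by
        refine lp_of_isIso _ ?_
        rw [show initial.to (⊥_ C) = 𝟙 (⊥_ C) from initial.hom_ext _ _]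
        infer_instance
      iso_W := P.iso_W
      iso_cof := fun f hf _ => lp_of_isIso f hf
      W_comp := P.W_comp
      W_cancel_left := P.W_cancel_left
      W_cancel_right := P.W_cancel_right
      pushout_exists := by
        intro A B X i f hi _ _
        obtain ⟨D, h, g, hpo⟩ := hi.1 f
        exact ⟨D, g, h, hpo.flip⟩
      pushout_cof := fun i f g j hi _ _ hpo => lp_pushout hi hpo.flip
      pushout_triv_cof := fun i f g j hi hwi _ _ hpo => lp_triv_pushout hP hi hwi hpo.flip
      factorization := fun f _ => lp_factorization hP f }, rfl, rfl⟩
end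

section
/- Dold's Lemma: given Hurewicz cofibrations i : A → B and i' : A → C of topological spaces and a map f : B → C with f ∘ i = i', if f is a homotopy equivalence then f is a homotopy equivalence under A, i.e. there is g : C → B with g ∘ i' = i and homotopies g ∘ f ≃ id_B and f ∘ g ≃ id_C that are constant on A. -/
open unitInterval

universe u

/-- A continuous map `i : A → B` is a Hurewicz cofibration if it has the homotopy
extension property with respect to every topological space. -/
def IsHurewiczCofibration {A B : Type u} [TopologicalSpace A] [TopologicalSpace B]
    (i : C(A, B)) : Prop :=
  ∀ (Z : Type u) [TopologicalSpace Z] (f : C(B, Z)) (H : C(I × A, Z)),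
    (∀ a, H (0, a) = f (i a)) →
    ∃ H' : C(I × B, Z), (∀ b, H' (0, b) = f b) ∧ ∀ (t : I) (a : A), H' (t, i a) = H (t, a)

/-- `u` and `v : B → Z` are homotopic under `A` (relative to `i : A → B`): there is a
homotopy from `u` to `v` which is constant on `A`. -/
def HomotopicUnder {A B Z : Type u} [TopologicalSpace A] [TopologicalSpace B]
    [TopologicalSpace Z] (i : C(A, B)) (u v : C(B, Z)) : Prop :=
  ∃ h : C(I × B, Z), (∀ b, h (0, b) = u b) ∧ (∀ b, h (1, b) = v b) ∧
    ∀ (t : I) (a : A), h (t, i a) = u (i a)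

/-!
A homotopy `F : u ≃ v` of maps `B → Z` whose restriction to `I × A` is null-homotopic relative to
`∂I × A` can be straightened into a homotopy relative to `A`, using the HEP for `i` with values in
the path space `C(I, Z)`.

If `H : g₀ ∘ f ≃ id`, extending `H` on `A` along `i'` from `g₀` gives `g ≃ g₀` with `g ∘ i' = i`,
and the reversed extension followed by `H` is a homotopy `g ∘ f ≃ id` which on `A` is a path
followed by its reverse, so it can be straightened. Thus a free left homotopy inverse can be
replaced by one under `A`. Applied to `f` and then to its left inverse `g`, this makes `g` a
two-sided homotopy inverse under `A`.
-/

open ContinuousMap Set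

theorem homotopicUnder_iff_homotopicRel {A B Z : Type u} [TopologicalSpace A]
    [TopologicalSpace B] [TopologicalSpace Z] {i : C(A, B)} {u v : C(B, Z)} :
    HomotopicUnder i u v ↔ u.HomotopicRel v (range i) := by
  constructor
  · rintro ⟨h, h0, h1, hA⟩
    exact ⟨{ toContinuousMap := h, map_zero_left := h0, map_one_left := h1
             prop' := by rintro t _ ⟨a, rfl⟩; exact hA t a }⟩
  · rintro ⟨F⟩
    exact ⟨F.toContinuousMap, F.apply_zero, F.apply_one, fun t a => F.eq_fst t ⟨a, rfl⟩⟩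

theorem ContinuousMap.HomotopicRel.precomp {X Y W : Type*} [TopologicalSpace X]
    [TopologicalSpace Y] [TopologicalSpace W] {f₀ f₁ : C(X, Y)} {S : Set X}
    (h : f₀.HomotopicRel f₁ S) (e : C(W, X)) {T : Set W} (he : MapsTo e T S) :
    (f₀.comp e).HomotopicRel (f₁.comp e) T := by
  obtain ⟨F⟩ := h
  exact ⟨{ toHomotopy := F.toHomotopy.compContinuousMap e
           prop' := fun t w hw => F.eq_fst t (he hw) }⟩

def foldHalf : C(I, I) where
  toFun t := ⟨|1 - 2 * (t : ℝ)|, abs_nonneg _, abs_le.2 ⟨by linarith [t.2.2], by linarith [t.2.1]⟩⟩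

@[simp] theorem coe_foldHalf (t : I) : (foldHalf t : ℝ) = |1 - 2 * (t : ℝ)| := rfl

theorem foldHalf_of_mem_boundary {t : I} (ht : t = 0 ∨ t = 1) : foldHalf t = 1 := by
  rcases ht with rfl | rfl <;> ext <;> norm_num

theorem homotopicRel_comp_foldHalf {Y Z : Type*} [TopologicalSpace Y] [TopologicalSpace Z]
    (G : C(I × Y, Z)) :
    (G.comp (foldHalf.prodMap (.id Y))).HomotopicRel ((G.curry 1).comp .snd)
      {p | p.1 = 0 ∨ p.1 = 1} :=
  ⟨{ toFun := fun p => G (max p.1 (foldHalf p.2.1), p.2.2)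
     map_zero_left := fun p => by simp [Prod.map]
     map_one_left := fun p => by simp [max_eq_left le_one']
     prop' := fun s p hp => by simp [Prod.map, foldHalf_of_mem_boundary hp, max_eq_right le_one'] }⟩

-- The path `(0,0) → (1,0) → (1,1) → (0,1)` along three sides of the square `I × I`.
noncomputable def threeSides : C(I, I × I) where
  toFun t := (projIcc 0 1 zero_le_one (min (3 * t) (3 - 3 * t)),
    projIcc 0 1 zero_le_one (3 * t - 1))

theorem threeSides_zero : threeSides 0 = (0, 0) := by
  ext <;> simp [threeSides, projIcc]

theorem threeSides_one : threeSides 1 = (0, 1) := by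
  ext <;> norm_num [threeSides, projIcc]

theorem threeSides_mem (t : I) :
    (threeSides t).1 = 1 ∨ (threeSides t).2 = 0 ∨ (threeSides t).2 = 1 := by
  simp only [threeSides, ContinuousMap.coe_mk]
  by_cases h₁ : (t : ℝ) ≤ 1 / 3
  · exact Or.inr (Or.inl (projIcc_of_le_left _ (by linarith)))
  by_cases h₂ : (t : ℝ) ≤ 2 / 3
  · exact Or.inl (projIcc_of_right_le _ (le_min (by linarith) (by linarith)))
  · exact Or.inr (Or.inr (projIcc_of_right_le _ (by linarith)))

theorem homotopicRel_range_of_homotopy {A B Z : Type u} [TopologicalSpace A]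
    [TopologicalSpace B] [TopologicalSpace Z] {i : C(A, B)} (hi : IsHurewiczCofibration i)
    {u v : C(B, Z)} (F : Homotopy u v)
    (hF : (F.toContinuousMap.comp ((ContinuousMap.id I).prodMap i)).HomotopicRel
      ((u.comp i).comp .snd) {p | p.1 = 0 ∨ p.1 = 1}) :
    u.HomotopicRel v (range i) := by
  -- Extend the null-homotopy `S` of `F` on `A` to `I × B` by the HEP for `i`, with values in the
  -- path space `C(I, Z)`, then read the extension off along the other three sides of the square.
  obtain ⟨S⟩ := hF
  obtain ⟨G, hG0, hGA⟩ := hi C(I, Z) (F.toContinuousMap.comp .prodSwap).curry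
    (S.toContinuousMap.comp ⟨fun p : (I × A) × I => (p.1.1, p.2, p.1.2), by fun_prop⟩).curry
    (fun a => by ext t; simp)
  refine ⟨{ toFun := fun p => G ((threeSides p.1).1, p.2) (threeSides p.1).2
            continuous_toFun := by fun_prop
            map_zero_left := fun b => by simp [threeSides_zero, hG0]
            map_one_left := fun b => by simp [threeSides_one, hG0]
            prop' := ?_ }⟩
  rintro t _ ⟨a, rfl⟩
  simp only [ContinuousMap.coe_mk, hGA, curry_apply, comp_apply]
  rcases threeSides_mem t with h | h
  · rw [h]; exact S.apply_one _
  · exact S.eq_snd _ h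

theorem exists_left_inverse_homotopicRel {A B X : Type u} [TopologicalSpace A]
    [TopologicalSpace B] [TopologicalSpace X] {i : C(A, B)} {i' : C(A, X)}
    (hi : IsHurewiczCofibration i) (hi' : IsHurewiczCofibration i') {f : C(B, X)}
    (hf : ∀ a, f (i a) = i' a) {g₀ : C(X, B)} (hg₀ : (g₀.comp f).Homotopic (.id B)) :
    ∃ g : C(X, B), (∀ a, g (i' a) = i a) ∧ (g.comp f).HomotopicRel (.id B) (range i) := by
  obtain ⟨H⟩ := hg₀
  obtain ⟨P, hP0, hPA⟩ := hi' B g₀ (H.toContinuousMap.comp ((ContinuousMap.id I).prodMap i))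
    (fun a => by simp [hf])
  let P' : Homotopy g₀ (P.curry 1) := ⟨P, hP0, fun _ => rfl⟩
  have hg : ∀ a, P.curry 1 (i' a) = i a := fun a => by simp [hPA]
  refine ⟨P.curry 1, hg,
    homotopicRel_range_of_homotopy hi ((P'.compContinuousMap f).symm.trans H) ?_⟩
  -- On `A` the homotopy runs backwards along `H` and then forwards again.
  convert homotopicRel_comp_foldHalf (H.toContinuousMap.comp ((ContinuousMap.id I).prodMap i))
    using 1 <;> ext ⟨t, a⟩
  · simp only [comp_apply, prodMap_apply, Prod.map, coe_id, id_eq, Homotopy.coe_toContinuousMap,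
      Homotopy.trans_apply]
    split_ifs with ht
    · simp only [Homotopy.symm_apply, Homotopy.compContinuousMap_apply, hf]
      refine (hPA _ a).trans (congrArg (fun s => H (s, i a)) (Subtype.ext ?_))
      simp [abs_of_nonneg (by linarith : 0 ≤ 1 - 2 * (t : ℝ))]
    · refine congrArg (fun s => H (s, i a)) (Subtype.ext ?_)
      simp [abs_of_nonpos (by linarith : 1 - 2 * (t : ℝ) ≤ 0)]
  · simp [hf, hg]

theorem ContinuousMap.Homotopic.right_inverse_of_left_inverse {X Y : Type*} [TopologicalSpace X]
    [TopologicalSpace Y] {f : C(X, Y)} {g g₀ : C(Y, X)} (hgf : (g.comp f).Homotopic (.id X))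
    (hfg₀ : (f.comp g₀).Homotopic (.id Y)) : (f.comp g).Homotopic (.id Y) :=
  -- `f ∘ g ≃ f ∘ g ∘ f ∘ g₀ ≃ f ∘ g₀ ≃ id`
  (((Homotopic.refl (f.comp g)).comp hfg₀).symm.trans
    ((Homotopic.refl f).comp (hgf.comp (.refl g₀)) :)).trans hfg₀

/-- Dold's Lemma: given Hurewicz cofibrations `i : A → B` and `i' : A → X` and a map
`f : B → X` under `A` which is a homotopy equivalence, `f` is a homotopy equivalence
under `A`. -/
theorem dold_lemma {A B X : Type u}
    [TopologicalSpace A] [TopologicalSpace B] [TopologicalSpace X]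
    (i : C(A, B)) (i' : C(A, X)) (f : C(B, X))
    (hi : IsHurewiczCofibration i) (hi' : IsHurewiczCofibration i')
    (hcomm : ∀ a, f (i a) = i' a)
    (g₀ : C(X, B))
    (h₁ : (f.comp g₀).Homotopic (ContinuousMap.id X))
    (h₂ : (g₀.comp f).Homotopic (ContinuousMap.id B)) :
    ∃ g : C(X, B), (∀ a, g (i' a) = i a) ∧
      HomotopicUnder i (g.comp f) (ContinuousMap.id B) ∧
      HomotopicUnder i' (f.comp g) (ContinuousMap.id X) := by
  obtain ⟨g, hgi', hgf⟩ := exists_left_inverse_homotopicRel hi hi' hcomm h₂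
  obtain ⟨l, -, hlg⟩ := exists_left_inverse_homotopicRel hi' hi hgi'
    (hgf.homotopic.right_inverse_of_left_inverse h₁)
  have hg : MapsTo g (range i') (range i) := by rintro _ ⟨a, rfl⟩; exact ⟨a, (hgi' a).symm⟩
  have hfg : MapsTo (f.comp g) (range i') (range i') := by
    rintro _ ⟨a, rfl⟩; exact ⟨a, by simp [hgi', hcomm]⟩
  -- `f ∘ g ≃ l ∘ g ∘ f ∘ g ≃ l ∘ g ≃ id`, all relative to `A`
  have hfg_rel : (f.comp g).HomotopicRel (.id X) (range i') :=
    ((hlg.precomp _ hfg).symm.trans ((hgf.precomp g hg).comp_continuousMap l)).trans hlg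
  exact ⟨g, hgi', homotopicUnder_iff_homotopicRel.2 hgf, homotopicUnder_iff_homotopicRel.2 hfg_rel⟩
end

section
/- Let (M', W') and (M, W) be categories each equipped with a class of weak equivalences closed under composition and containing identities, and let t : M' → M be a left approximation functor. Then the induced functor ho t : M'[W'⁻¹] → M[W⁻¹] between homotopy categories is an equivalence of categories. -/
open CategoryTheory

universe v₁ u₁ v₂ u₂

/-!
LAP1 gives weak equivalences `p_A : t A' ⟶ A`. Sending `f : A ⟶ B` to the fraction
`j'⁻¹ ∘ i'` of a LAP2 filler of `p_A ≫ f` against `p_B` is well defined by LAP2 (2), and is a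
functor `M ⥤ ho M'` inverting `W`, because a filler of `σ ≫ g` composes with a filler
`(i', j', σ)` to a filler of the composite. Its lift to `ho M` is quasi-inverse to `ho t`: the
filler `(g, 𝟙, p)` of `t g ≫ p` against `p` identifies the fraction of `t g` with `g`, and the
`σ` of each filler identifies the image of a fraction under `ho t` with `p⁻¹ ∘ f`.
-/

namespace CategoryTheory

open Category CategoryTheory.Localization

variable {M' : Type u₁} [Category.{v₁} M'] {M : Type u₂} [Category.{v₂} M]

structure Functor.IsLeftApproximation (t : M' ⥤ M) (W' : MorphismProperty M')
    (W : MorphismProperty M) : Prop where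
  map_mem : ∀ {X Y : M'} (f : X ⟶ Y), W' f → W (t.map f)
  exists_approx : ∀ A : M, ∃ (A' : M') (p : t.obj A' ⟶ A), W p
  exists_filler : ∀ {A' B' : M'} {B : M} (f : t.obj A' ⟶ B) (p : t.obj B' ⟶ B), W p →
    ∃ (D' : M') (i' : A' ⟶ D') (j' : B' ⟶ D') (σ : t.obj D' ⟶ B),
      W' j' ∧ W σ ∧ t.map i' ≫ σ = f ∧ t.map j' ≫ σ = p
  filler_fraction_eq : ∀ {A' B' D₁ D₂ : M'} {B : M} (f : t.obj A' ⟶ B) (p : t.obj B' ⟶ B)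
    (i₁ : A' ⟶ D₁) (j₁ : B' ⟶ D₁) (σ₁ : t.obj D₁ ⟶ B)
    (i₂ : A' ⟶ D₂) (j₂ : B' ⟶ D₂) (σ₂ : t.obj D₂ ⟶ B),
    W p →
    ∀ (hj₁ : W' j₁), W σ₁ → t.map i₁ ≫ σ₁ = f → t.map j₁ ≫ σ₁ = p →
    ∀ (hj₂ : W' j₂), W σ₂ → t.map i₂ ≫ σ₂ = f → t.map j₂ ≫ σ₂ = p →
    W'.Q.map i₁ ≫ (isoOfHom W'.Q W' j₁ hj₁).inv =
      W'.Q.map i₂ ≫ (isoOfHom W'.Q W' j₂ hj₂).inv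

namespace Functor.IsLeftApproximation

variable {t : M' ⥤ M} {W' : MorphismProperty M'} {W : MorphismProperty M}

lemma id_obj_mem (h : t.IsLeftApproximation W' W) [W'.ContainsIdentities] (X : M') :
    W (𝟙 (t.obj X)) := by
  simpa using h.map_mem _ (W'.id_mem X)

lemma exists_fraction (h : t.IsLeftApproximation W' W) {A' B' : M'} {B : M}
    (f : t.obj A' ⟶ B) (p : t.obj B' ⟶ B) (hp : W p) :
    ∃ φ : W'.Q.obj A' ⟶ W'.Q.obj B', ∀ (D' : M') (i : A' ⟶ D') (j : B' ⟶ D')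
      (σ : t.obj D' ⟶ B) (hj : W' j), W σ → t.map i ≫ σ = f → t.map j ≫ σ = p →
      W'.Q.map i ≫ (isoOfHom W'.Q W' j hj).inv = φ := by
  obtain ⟨D₀, i₀, j₀, σ₀, hj₀, hσ₀, hi₀, hjσ₀⟩ := h.exists_filler f p hp
  exact ⟨_, fun D' i j σ hj hσ hi hjσ =>
    h.filler_fraction_eq f p i j σ i₀ j₀ σ₀ hp hj hσ hi hjσ hj₀ hσ₀ hi₀ hjσ₀⟩

noncomputable def fraction (h : t.IsLeftApproximation W' W) {A' B' : M'} {B : M}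
    (f : t.obj A' ⟶ B) (p : t.obj B' ⟶ B) (hp : W p) : W'.Q.obj A' ⟶ W'.Q.obj B' :=
  (h.exists_fraction f p hp).choose

lemma fraction_eq (h : t.IsLeftApproximation W' W) {A' B' D' : M'} {B : M}
    {f : t.obj A' ⟶ B} {p : t.obj B' ⟶ B} (hp : W p) (i : A' ⟶ D') (j : B' ⟶ D')
    (σ : t.obj D' ⟶ B) (hj : W' j) (hσ : W σ) (hi : t.map i ≫ σ = f)
    (hjσ : t.map j ≫ σ = p) :
    h.fraction f p hp = W'.Q.map i ≫ (isoOfHom W'.Q W' j hj).inv :=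
  ((h.exists_fraction f p hp).choose_spec D' i j σ hj hσ hi hjσ).symm

lemma fraction_map_comp (h : t.IsLeftApproximation W' W) [W'.ContainsIdentities] {A' B' : M'}
    {B : M} (g : A' ⟶ B') (p : t.obj B' ⟶ B) (hp : W p) :
    h.fraction (t.map g ≫ p) p hp = W'.Q.map g := by
  simp [h.fraction_eq hp g (𝟙 B') p (W'.id_mem B') hp rfl (by simp)]

lemma fraction_self (h : t.IsLeftApproximation W' W) [W'.ContainsIdentities] {A' : M'} {B : M}
    (p : t.obj A' ⟶ B) (hp : W p) : h.fraction p p hp = 𝟙 _ := by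
  simpa using h.fraction_map_comp (𝟙 A') p hp

lemma fraction_map (h : t.IsLeftApproximation W' W) [W'.ContainsIdentities] {A' B' : M'}
    (g : A' ⟶ B') : h.fraction (t.map g) (𝟙 _) (h.id_obj_mem B') = W'.Q.map g := by
  simpa using h.fraction_map_comp g (𝟙 _) (h.id_obj_mem B')

lemma fraction_comp (h : t.IsLeftApproximation W' W) {A' B' C' : M'} {B C : M}
    (f : t.obj A' ⟶ B) (p : t.obj B' ⟶ B) (hp : W p) (g : B ⟶ C) (q : t.obj C' ⟶ C)
    (hq : W q) :
    h.fraction f p hp ≫ h.fraction (p ≫ g) q hq = h.fraction (f ≫ g) q hq := by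
  obtain ⟨D, i, j, σ, hj, hσ, hi, hjσ⟩ := h.exists_filler f p hp
  obtain ⟨E, k, l, τ, hl, hτ, hk, hlτ⟩ := h.exists_filler (σ ≫ g) q hq
  rw [h.fraction_eq hp i j σ hj hσ hi hjσ,
    h.fraction_eq hq (j ≫ k) l τ hl hτ (by rw [t.map_comp, assoc, hk, ← assoc, hjσ]) hlτ,
    h.fraction_eq hq (i ≫ k) l τ hl hτ (by rw [t.map_comp, assoc, hk, ← assoc, hi]) hlτ]
  simp

lemma fraction_comp_fraction (h : t.IsLeftApproximation W' W) [W'.ContainsIdentities]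
    {A' B' C' : M'} {B : M} (f : t.obj A' ⟶ B) (p : t.obj B' ⟶ B) (hp : W p)
    (q : t.obj C' ⟶ B) (hq : W q) :
    h.fraction f p hp ≫ h.fraction p q hq = h.fraction f q hq := by
  simpa using h.fraction_comp f p hp (𝟙 B) q hq

lemma fraction_comp_map (h : t.IsLeftApproximation W' W) [W'.ContainsIdentities]
    {A' B' C' : M'} (f : t.obj A' ⟶ t.obj B') (g : B' ⟶ C') :
    h.fraction f (𝟙 _) (h.id_obj_mem B') ≫ W'.Q.map g =
      h.fraction (f ≫ t.map g) (𝟙 _) (h.id_obj_mem C') := by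
  rw [← h.fraction_map g]
  simpa using h.fraction_comp f (𝟙 _) (h.id_obj_mem B') (t.map g) (𝟙 _) (h.id_obj_mem C')

noncomputable def fractionIso (h : t.IsLeftApproximation W' W) [W'.ContainsIdentities]
    {A' B' : M'} {B : M} (p : t.obj A' ⟶ B) (q : t.obj B' ⟶ B) (hp : W p) (hq : W q) :
    W'.Q.obj A' ≅ W'.Q.obj B' where
  hom := h.fraction p q hq
  inv := h.fraction q p hp
  hom_inv_id := by rw [fraction_comp_fraction, fraction_self]
  inv_hom_id := by rw [fraction_comp_fraction, fraction_self]

noncomputable def approxObj (h : t.IsLeftApproximation W' W) (A : M) : M' :=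
  (h.exists_approx A).choose

noncomputable def approxHom (h : t.IsLeftApproximation W' W) (A : M) :
    t.obj (h.approxObj A) ⟶ A :=
  (h.exists_approx A).choose_spec.choose

lemma approxHom_mem (h : t.IsLeftApproximation W' W) (A : M) : W (h.approxHom A) :=
  (h.exists_approx A).choose_spec.choose_spec

noncomputable def inverse (h : t.IsLeftApproximation W' W) [W'.ContainsIdentities] :
    M ⥤ W'.Localization where
  obj A := W'.Q.obj (h.approxObj A)
  map {A B} f := h.fraction (h.approxHom A ≫ f) (h.approxHom B) (h.approxHom_mem B)
  map_id A := by rw [comp_id, fraction_self]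
  map_comp f g := by rw [fraction_comp, assoc]

lemma isInvertedBy_inverse (h : t.IsLeftApproximation W' W) [W'.ContainsIdentities]
    [W.IsStableUnderComposition] : W.IsInvertedBy h.inverse := fun A B w hw =>
  (h.fractionIso (h.approxHom A ≫ w) (h.approxHom B)
    (W.comp_mem _ _ (h.approxHom_mem A) hw) (h.approxHom_mem B)).isIso_hom

noncomputable def compInverseIso (h : t.IsLeftApproximation W' W) [W'.ContainsIdentities] :
    t ⋙ h.inverse ≅ W'.Q :=
  NatIso.ofComponents
    (fun A' => h.fractionIso (h.approxHom (t.obj A')) (𝟙 _) (h.approxHom_mem _)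
      (h.id_obj_mem A'))
    (fun f => (h.fraction_comp_fraction _ _ (h.approxHom_mem _) _ _).trans
      (h.fraction_comp_map _ f).symm)

lemma map_fraction (h : t.IsLeftApproximation W' W) {D : Type*} [Category D]
    (F : W'.Localization ⥤ D) (L : M ⥤ D) (τ : W'.Q ⋙ F ⟶ t ⋙ L) {A' B' : M'} {B : M}
    (f : t.obj A' ⟶ B) (p : t.obj B' ⟶ B) (hp : W p) :
    F.map (h.fraction f p hp) ≫ τ.app B' ≫ L.map p = τ.app A' ≫ L.map f := by
  obtain ⟨D', i, j, σ, hj, hσ, hi, hjσ⟩ := h.exists_filler f p hp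
  have hτi := τ.naturality i
  have hτj := τ.naturality j
  simp only [Functor.comp_map] at hτi hτj
  rw [h.fraction_eq hp i j σ hj hσ hi hjσ, ← hi, ← hjσ, L.map_comp, L.map_comp,
    ← reassoc_of% hτi, ← reassoc_of% hτj, ← F.map_comp_assoc, assoc, isoOfHom_inv_hom_id,
    comp_id]

noncomputable def inverseCompIso (h : t.IsLeftApproximation W' W) [W'.ContainsIdentities]
    {D : Type*} [Category D] (F : W'.Localization ⥤ D) (L : M ⥤ D) [L.IsLocalization W]
    (e : W'.Q ⋙ F ≅ t ⋙ L) : h.inverse ⋙ F ≅ L :=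
  NatIso.ofComponents
    (fun A => e.app (h.approxObj A) ≪≫ isoOfHom L W (h.approxHom A) (h.approxHom_mem A))
    (fun f => (h.map_fraction F L e.hom _ _ (h.approxHom_mem _)).trans
      (by rw [L.map_comp, ← assoc]; rfl))

theorem isEquivalence_lift (h : t.IsLeftApproximation W' W) [W'.ContainsIdentities]
    [W.IsStableUnderComposition] {D : Type*} [Category D] (L : M ⥤ D) [L.IsLocalization W]
    (hF : W'.IsInvertedBy (t ⋙ L)) : (lift (t ⋙ L) hF W'.Q).IsEquivalence :=
  Localization.isEquivalence W'.Q W' L W (t ⋙ L) _ h.inverse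
    (lift h.inverse h.isInvertedBy_inverse L)
    (Functor.associator _ _ _ ≪≫ Functor.isoWhiskerLeft t (fac _ _ L) ≪≫ h.compInverseIso)
    (h.inverseCompIso _ L (fac _ _ W'.Q))

end Functor.IsLeftApproximation

end CategoryTheory

theorem approximation_theorem_general
    {M' : Type u₁} [Category.{v₁} M'] {M : Type u₂} [Category.{v₂} M]
    (W' : MorphismProperty M') (W : MorphismProperty M)
    -- category pairs: the weak equivalences contain identities and are closed under
    -- composition
    (hW'id : ∀ X : M', W' (𝟙 X))
    (hWcomp : ∀ {X Y Z : M} (f : X ⟶ Y) (g : Y ⟶ Z), W f → W g → W (f ≫ g))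
    (t : M' ⥤ M)
    -- `t` preserves weak equivalences
    (ht : ∀ {X Y : M'} (f : X ⟶ Y), W' f → W (t.map f))
    -- LAP1
    (lap1 : ∀ A : M, ∃ (A' : M') (p : t.obj A' ⟶ A), W p)
    -- LAP2 (1)
    (lap2a : ∀ {A' B' : M'} {B : M} (f : t.obj A' ⟶ B) (p : t.obj B' ⟶ B), W p →
      ∃ (D' : M') (i' : A' ⟶ D') (j' : B' ⟶ D') (σ : t.obj D' ⟶ B),
        W' j' ∧ W σ ∧ t.map i' ≫ σ = f ∧ t.map j' ≫ σ = p)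
    -- LAP2 (2): any two such fillers agree as fractions `j'⁻¹ ∘ i'` in `ho M'`
    (lap2b : ∀ {A' B' D₁ D₂ : M'} {B : M} (f : t.obj A' ⟶ B) (p : t.obj B' ⟶ B)
      (i₁ : A' ⟶ D₁) (j₁ : B' ⟶ D₁) (σ₁ : t.obj D₁ ⟶ B)
      (i₂ : A' ⟶ D₂) (j₂ : B' ⟶ D₂) (σ₂ : t.obj D₂ ⟶ B),
      W p →
      ∀ (hj₁ : W' j₁), W σ₁ → t.map i₁ ≫ σ₁ = f → t.map j₁ ≫ σ₁ = p →
      ∀ (hj₂ : W' j₂), W σ₂ → t.map i₂ ≫ σ₂ = f → t.map j₂ ≫ σ₂ = p →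
      W'.Q.map i₁ ≫ (Localization.isoOfHom W'.Q W' j₁ hj₁).inv =
        W'.Q.map i₂ ≫ (Localization.isoOfHom W'.Q W' j₂ hj₂).inv) :
    (Localization.lift (t ⋙ W.Q)
        (fun _ _ f hf => Localization.inverts W.Q W (t.map f) (ht f hf))
        W'.Q).IsEquivalence := by
  have : W'.ContainsIdentities := ⟨hW'id⟩
  have : W.IsStableUnderComposition := ⟨hWcomp⟩
  exact Functor.IsLeftApproximation.isEquivalence_lift ⟨ht, lap1, lap2a, lap2b⟩ W.Q _

/-- The Approximation Theorem: a left approximation functor `t : (M', W') → (M, W)`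
between category pairs induces an equivalence of homotopy categories
`ho M' → ho M`. -/
theorem approximation_theorem
    {M' : Type u₁} [Category.{v₁} M'] {M : Type u₂} [Category.{v₂} M]
    (W' : MorphismProperty M') (W : MorphismProperty M)
    -- category pairs: the weak equivalences contain identities and are closed under
    -- composition
    (hW'id : ∀ X : M', W' (𝟙 X))
    (hW'comp : ∀ {X Y Z : M'} (f : X ⟶ Y) (g : Y ⟶ Z), W' f → W' g → W' (f ≫ g))
    (hWid : ∀ X : M, W (𝟙 X))
    (hWcomp : ∀ {X Y Z : M} (f : X ⟶ Y) (g : Y ⟶ Z), W f → W g → W (f ≫ g))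
    (t : M' ⥤ M)
    -- `t` preserves weak equivalences
    (ht : ∀ {X Y : M'} (f : X ⟶ Y), W' f → W (t.map f))
    -- LAP1
    (lap1 : ∀ A : M, ∃ (A' : M') (p : t.obj A' ⟶ A), W p)
    -- LAP2 (1)
    (lap2a : ∀ {A' B' : M'} {B : M} (f : t.obj A' ⟶ B) (p : t.obj B' ⟶ B), W p →
      ∃ (D' : M') (i' : A' ⟶ D') (j' : B' ⟶ D') (σ : t.obj D' ⟶ B),
        W' j' ∧ W σ ∧ t.map i' ≫ σ = f ∧ t.map j' ≫ σ = p)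
    -- LAP2 (2): any two such fillers agree as fractions `j'⁻¹ ∘ i'` in `ho M'`
    (lap2b : ∀ {A' B' D₁ D₂ : M'} {B : M} (f : t.obj A' ⟶ B) (p : t.obj B' ⟶ B)
      (i₁ : A' ⟶ D₁) (j₁ : B' ⟶ D₁) (σ₁ : t.obj D₁ ⟶ B)
      (i₂ : A' ⟶ D₂) (j₂ : B' ⟶ D₂) (σ₂ : t.obj D₂ ⟶ B),
      W p →
      ∀ (hj₁ : W' j₁), W σ₁ → t.map i₁ ≫ σ₁ = f → t.map j₁ ≫ σ₁ = p →
      ∀ (hj₂ : W' j₂), W σ₂ → t.map i₂ ≫ σ₂ = f → t.map j₂ ≫ σ₂ = p →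
      W'.Q.map i₁ ≫ (Localization.isoOfHom W'.Q W' j₁ hj₁).inv =
        W'.Q.map i₂ ≫ (Localization.isoOfHom W'.Q W' j₂ hj₂).inv) :
    (Localization.lift (t ⋙ W.Q)
        (fun _ _ f hf => Localization.inverts W.Q W (t.map f) (ht f hf))
        W'.Q).IsEquivalence :=
  approximation_theorem_general W' W hW'id hWcomp t ht lap1 lap2a lap2b
end

section
/- Fubini for Grothendieck constructions: let H : D → Cat be a functor from a small category to small categories, with Grothendieck construction ∫_D H and projection p : ∫_D H → D. For a diagram X : ∫_D H → M in a category M, if the colimit colim^{H(d)} X of the restriction of X to each fiber H(d) exists for all d, and if either colim over ∫_D H of X exists or the iterated colimit colim^{d ∈ D} colim^{H(d)} X exists, then both exist and are naturally isomorphic. A key step: for each object d of D, the inclusion of the fiber p⁻¹(d) into the comma category (p ↓ d) admits a left adjoint, hence is right cofinal. -/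
/-!
Every morphism `g : (c, x) ⟶ (c', x')` of `∫ F` factors as the transport
`(c, x) ⟶ (c', F g.base x)` followed by the fibre morphism `g.fiber`. Consequently a cocone on
`X` is the same as a family of cocones on its restrictions to the fibres that is compatible with
the transports. Each of these factors uniquely through the fibrewise colimit cocone `ψ c`, and the
compatibility of the `ψ` with `Y.map` turns the factorizations into a cocone on `Y`. Conversely a
cocone on `Y` precomposed with the `ψ` is a cocone on `X`. Both constructions keep the cocone
point and send colimit cocones to colimit cocones.

For the key step, a morphism from an object `(x, t : x.base ⟶ c)` of `(p ↓ c)` to a fibre object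
`((c, y), 𝟙 c)` has base `t`, so it amounts to a morphism `F t x.fiber ⟶ y` in `F c`. Hence
`(x, t) ↦ F t x.fiber` is left adjoint to the fibre inclusion.
-/

open CategoryTheory CategoryTheory.Limits

universe w v u v₁ u₁ v₂ u₂ v₃ u₃

namespace CategoryTheory.Grothendieck

variable {C : Type u₁} [Category.{v₁} C] {F : C ⥤ Cat.{v₂, u₂}}

theorem comp_ι_map {x : Grothendieck F} {c : C} {y y' : F.obj c} (f : x ⟶ ⟨c, y⟩)
    (g : y ⟶ y') : f ≫ (ι F c).map g = ⟨f.base, f.fiber ≫ g⟩ := by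
  fapply Grothendieck.ext
  · exact Category.comp_id _
  · simp only [ι, comp_fiber, Functor.congr_hom (congrArg Cat.Hom.toFunctor (F.map_id c)),
      Cat.Hom.id_toFunctor, Functor.id_obj, Functor.id_map, Category.assoc, eqToHom_trans_assoc,
      eqToHom_refl, Category.id_comp]
    exact (eqToHom_trans_assoc _ _ _).trans
      ((congrArg (· ≫ f.fiber ≫ g) (eqToHom_refl _ _)).trans (Category.id_comp _))

theorem ιNatTrans_app_comp_ι_map {x z : Grothendieck F} (g : x ⟶ z) :
    (ιNatTrans g.base).app x.fiber ≫ (ι F z.base).map g.fiber = g :=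
  (comp_ι_map _ _).trans (congrArg (Hom.mk g.base) (Category.id_comp _))

section FiberInclusion

variable (F) in
def fiberToCostructuredArrow (c : C) : F.obj c ⥤ CostructuredArrow (forget F) c :=
  (ι F c).toCostructuredArrow (forget F) c (fun _ => 𝟙 c) (fun _ => Category.comp_id _)

lemma hom_fiberToCostructuredArrow_left_base {c : C} {a : CostructuredArrow (forget F) c}
    {y : F.obj c} (η : a ⟶ (fiberToCostructuredArrow F c).obj y) : η.left.base = a.hom :=
  (Category.comp_id _).symm.trans (CostructuredArrow.w η)

def fiberToCostructuredArrowHomEquiv {c : C} (a : CostructuredArrow (forget F) c)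
    (y : F.obj c) :
    ((F.map a.hom).toFunctor.obj a.left.fiber ⟶ y) ≃
      (a ⟶ (fiberToCostructuredArrow F c).obj y) where
  toFun u := CostructuredArrow.homMk ⟨a.hom, u⟩ (Category.comp_id _)
  invFun η := eqToHom (congrArg (fun t => (F.map t).toFunctor.obj a.left.fiber)
    (hom_fiberToCostructuredArrow_left_base η).symm) ≫ η.left.fiber
  left_inv u := Category.id_comp u
  right_inv η := by
    ext1
    fapply Grothendieck.ext
    · exact (hom_fiberToCostructuredArrow_left_base η).symm
    · exact (eqToHom_trans_assoc _ _ _).trans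
        ((congrArg (· ≫ η.left.fiber) (eqToHom_refl _ _)).trans (Category.id_comp _))

lemma fiberToCostructuredArrowHomEquiv_comp {c : C} (a : CostructuredArrow (forget F) c)
    {y y' : F.obj c} (u : (F.map a.hom).toFunctor.obj a.left.fiber ⟶ y) (g : y ⟶ y') :
    fiberToCostructuredArrowHomEquiv a y' (u ≫ g) =
      fiberToCostructuredArrowHomEquiv a y u ≫ (fiberToCostructuredArrow F c).map g :=
  CostructuredArrow.hom_ext _ _ (comp_ι_map (x := a.left) (c := c) ⟨a.hom, u⟩ g).symm

variable (F) in
def pushforwardToFiber (c : C) : CostructuredArrow (forget F) c ⥤ F.obj c :=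
  Adjunction.leftAdjointOfEquiv fiberToCostructuredArrowHomEquiv fun a _ _ g u =>
    fiberToCostructuredArrowHomEquiv_comp a u g

def pushforwardToFiberAdjunction (c : C) :
    pushforwardToFiber F c ⊣ fiberToCostructuredArrow F c :=
  Adjunction.adjunctionOfEquivLeft fiberToCostructuredArrowHomEquiv fun a _ _ g u =>
    fiberToCostructuredArrowHomEquiv_comp a u g

instance (c : C) : (fiberToCostructuredArrow F c).Final :=
  Functor.final_of_adjunction (pushforwardToFiberAdjunction c)

end FiberInclusion

section Fubini

variable {M : Type u₃} [Category.{v₃} M] {X : Grothendieck F ⥤ M} {Y : C ⥤ M}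
  {ψ : ∀ c, ι F c ⋙ X ⟶ (Functor.const (F.obj c)).obj (Y.obj c)}

variable
  (hnat : ∀ {c c' : C} (f : c ⟶ c') (x : F.obj c),
    (ψ c).app x ≫ Y.map f = X.map ((ιNatTrans f).app x) ≫ (ψ c').app ((F.map f).toFunctor.obj x))

def natTransIntoForgetComp : X ⟶ forget F ⋙ Y where
  app p := (ψ p.base).app p.fiber
  naturality p q g := by
    have hfiber : X.map ((ι F q.base).map g.fiber) ≫ (ψ q.base).app q.fiber =
        (ψ q.base).app _ := by
      simpa using (ψ q.base).naturality g.fiber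
    have hfactor : X.map g = X.map ((ιNatTrans g.base).app p.fiber) ≫
        X.map ((ι F q.base).map g.fiber) := by
      rw [← X.map_comp]
      exact congrArg X.map (ιNatTrans_app_comp_ι_map g).symm
    exact (congrArg (· ≫ (ψ q.base).app q.fiber) hfactor).trans <|
      (Category.assoc _ _ _).trans <| (congrArg (_ ≫ ·) hfiber).trans (hnat g.base p.fiber).symm

abbrev coconeOfCoconeFiberwise (t : Cocone Y) : Cocone X where
  pt := t.pt
  ι := natTransIntoForgetComp hnat ≫ Functor.whiskerLeft (forget F) t.ι

variable (hψ : ∀ c, IsColimit (⟨Y.obj c, ψ c⟩ : Cocone (ι F c ⋙ X)))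

abbrev coconeFiberwiseOfCocone (s : Cocone X) : Cocone Y where
  pt := s.pt
  ι.app c := (hψ c).desc (s.whisker (ι F c))
  ι.naturality c c' f := by
    refine (hψ c).hom_ext fun x => ?_
    dsimp only [Functor.comp_obj, Functor.const_obj_obj, Functor.const_obj_map]
    rw [Category.comp_id, ← Category.assoc, hnat, Category.assoc, (hψ c').fac, (hψ c).fac]
    exact s.w ((ιNatTrans f).app x)

def isColimitCoconeFiberwiseOfCocone {s : Cocone X} (hs : IsColimit s) :
    IsColimit (coconeFiberwiseOfCocone hnat hψ s) where
  desc t := hs.desc (coconeOfCoconeFiberwise hnat t)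
  fac t c := (hψ c).hom_ext fun x => by
    rw [← Category.assoc, (hψ c).fac]
    exact hs.fac _ _
  uniq t m hm := hs.hom_ext fun p => by
    rw [hs.fac]
    exact (congrArg (· ≫ m) ((hψ p.base).fac _ p.fiber)).symm.trans
      ((Category.assoc _ _ _).trans (congrArg _ (hm p.base)))

def isColimitCoconeOfCoconeFiberwise {t : Cocone Y} (ht : IsColimit t) :
    IsColimit (coconeOfCoconeFiberwise hnat t) where
  desc s := ht.desc (coconeFiberwiseOfCocone hnat hψ s)
  fac s p := (Category.assoc _ _ _).trans <|
    (congrArg _ (ht.fac _ p.base)).trans ((hψ p.base).fac _ p.fiber)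
  uniq s m hm := ht.hom_ext fun c => by
    rw [ht.fac]
    refine (hψ c).hom_ext fun x => ?_
    rw [(hψ c).fac, ← Category.assoc]
    exact hm ((ι F c).obj x)

end Fubini

end CategoryTheory.Grothendieck

/-- Fubini for Grothendieck constructions: given `H : D ⥤ Cat` and a diagram
`X : ∫_D H ⥤ M`, suppose the colimits of `X` over each fiber `H(d)` exist, assembled
into a functor `Y : D ⥤ M` (with colimiting cocones `ψ d`, compatible with the
transition functors). If either the colimit of `X` or the (outer) colimit of `Y`
exists, then both exist and are isomorphic. Moreover (key step) for each `d` the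
inclusion of the fiber `p⁻¹(d)` into the comma category `(p ↓ d)` admits a left
adjoint, hence is right cofinal. -/
theorem grothendieck_fubini {D : Type u} [SmallCategory D] (H : D ⥤ Cat.{u, u})
    {M : Type w} [Category.{v} M] (X : Grothendieck H ⥤ M)
    (Y : D ⥤ M)
    (ψ : ∀ d : D, (Grothendieck.ι H d ⋙ X) ⟶ (Functor.const ↑(H.obj d)).obj (Y.obj d))
    (hψ : ∀ d : D, Nonempty (IsColimit (⟨Y.obj d, ψ d⟩ : Cocone (Grothendieck.ι H d ⋙ X))))
    (hnat : ∀ {d d' : D} (f : d ⟶ d') (x : ↑(H.obj d)),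
      (ψ d).app x ≫ Y.map f =
        X.map ((Grothendieck.ιNatTrans f).app x) ≫ (ψ d').app ((H.map f).toFunctor.obj x)) :
    ((HasColimit X ∨ HasColimit Y) →
      ∃ (cX : Cocone X) (cY : Cocone Y),
        Nonempty (IsColimit cX) ∧ Nonempty (IsColimit cY) ∧ Nonempty (cX.pt ≅ cY.pt)) ∧
    (∀ d : D,
      ∃ (ι : ↑(H.obj d) ⥤ CostructuredArrow (Grothendieck.forget H) d)
        (L : CostructuredArrow (Grothendieck.forget H) d ⥤ ↑(H.obj d)),
        Nonempty (L ⊣ ι) ∧ ι.Final ∧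
        Nonempty (ι ⋙ CostructuredArrow.proj (Grothendieck.forget H) d ≅
          Grothendieck.ι H d)) := by
  have hψ' d := (hψ d).some
  refine ⟨fun h => ?_, fun d => ⟨Grothendieck.fiberToCostructuredArrow H d,
    Grothendieck.pushforwardToFiber H d, ⟨Grothendieck.pushforwardToFiberAdjunction d⟩,
    inferInstance, ⟨Iso.refl _⟩⟩⟩
  rcases h with hX | hY
  · exact ⟨_, _, ⟨colimit.isColimit X⟩,
      ⟨Grothendieck.isColimitCoconeFiberwiseOfCocone hnat hψ' (colimit.isColimit X)⟩,
      ⟨Iso.refl _⟩⟩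
  · exact ⟨_, _, ⟨Grothendieck.isColimitCoconeOfCoconeFiberwise hnat hψ' (colimit.isColimit Y)⟩,
      ⟨colimit.isColimit Y⟩, ⟨Iso.refl _⟩⟩
end
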